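/- arXiv:1207.3848 — 13 statements merged into one kernel-verified Lean document; each statement's English description precedes it below -/
import Mathlib

section
/- If M : J × J' → H is G-permutable, i.e., G : J × J' → J is comonotonic with M and M(G(x,s),t) = M(G(x,t),s) for all x ∈ J and s,t ∈ J', then G is itself permutable: G(G(x,s),t) = G(G(x,t),s) for all x ∈ J and s,t ∈ J'. -/
/-- `J` is a nonempty nondegenerate interval of nonnegative reals. -/
def NondegNonnegInterval (J : Set ℝ) : Prop :=
  J.OrdConnected ∧ (∃ a ∈ J, ∃ b ∈ J, a ≠ b) ∧ ∀ x ∈ J, 0 ≤ x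

/-- `M : J × J' → H` and `G : J × J' → H'` are comonotonic. -/
def Comonotonic (J J' : Set ℝ) (M G : ℝ → ℝ → ℝ) : Prop :=
  ∀ x ∈ J, ∀ y ∈ J, ∀ s ∈ J', ∀ t ∈ J', (M x s ≤ M y t ↔ G x s ≤ G y t)

theorem Comonotonic.apply_eq_apply_iff {J J' : Set ℝ} {M G : ℝ → ℝ → ℝ}
    (h : Comonotonic J J' M G) {x y s t : ℝ} (hx : x ∈ J) (hy : y ∈ J) (hs : s ∈ J')
    (ht : t ∈ J') : M x s = M y t ↔ G x s = G y t := by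
  simp only [le_antisymm_iff, h x hx y hy s hs t ht, h y hy x hx t ht s hs]

theorem G_permutable_of_M_G_permutable_general (J J' : Set ℝ) (M G : ℝ → ℝ → ℝ)
    (hG : ∀ x ∈ J, ∀ s ∈ J', G x s ∈ J)
    (hcom : Comonotonic J J' M G)
    (hperm : ∀ x ∈ J, ∀ s ∈ J', ∀ t ∈ J', M (G x s) t = M (G x t) s) :
    ∀ x ∈ J, ∀ s ∈ J', ∀ t ∈ J', G (G x s) t = G (G x t) s := fun x hx s hs t ht =>
  (hcom.apply_eq_apply_iff (hG x hx s hs) (hG x hx t ht) ht hs).mp (hperm x hx s hs t ht)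

/-- If `M : J × J' → H` is `G`-permutable, i.e. `G : J × J' → J` is comonotonic with `M`
and `M(G(x,s),t) = M(G(x,t),s)` for all `x ∈ J`, `s,t ∈ J'`, then `G` is permutable. -/
theorem G_permutable_of_M_G_permutable (J J' H : Set ℝ) (M G : ℝ → ℝ → ℝ)
    (hJ : NondegNonnegInterval J) (hJ' : NondegNonnegInterval J')
    (hH : NondegNonnegInterval H)
    (hM : ∀ x ∈ J, ∀ s ∈ J', M x s ∈ H)
    (hG : ∀ x ∈ J, ∀ s ∈ J', G x s ∈ J)
    (hcom : Comonotonic J J' M G)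
    (hperm : ∀ x ∈ J, ∀ s ∈ J', ∀ t ∈ J', M (G x s) t = M (G x t) s) :
    ∀ x ∈ J, ∀ s ∈ J', ∀ t ∈ J', G (G x s) t = G (G x t) s :=
  G_permutable_of_M_G_permutable_general J J' M G hG hcom hperm
end

section
/- Let G : J × J' → J be a solvable permutable code that is x₀-solvable, and define the operation ∙ on J by x ∙ y = G(x,v) where v is the unique element of J' with G(x₀,v) = y. Then ∙ is commutative: x ∙ y = y ∙ x for all x,y ∈ J. -/
/-- A (numerical) code `G : J × J' → H`: onto `H`, strictly increasing in the first
variable, strictly monotonic in the second, and continuous in both. -/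
def IsCode (J J' H : Set ℝ) (G : ℝ → ℝ → ℝ) : Prop :=
  (∀ x ∈ J, ∀ s ∈ J', G x s ∈ H) ∧
  (∀ p ∈ H, ∃ x ∈ J, ∃ s ∈ J', G x s = p) ∧
  (∀ s ∈ J', StrictMonoOn (fun x => G x s) J) ∧
  ((∀ x ∈ J, StrictMonoOn (fun s => G x s) J') ∨
    (∀ x ∈ J, StrictAntiOn (fun s => G x s) J')) ∧
  (∀ s ∈ J', ContinuousOn (fun x => G x s) J) ∧
  (∀ x ∈ J, ContinuousOn (fun s => G x s) J')

/-- Solvability condition [S1]: if `G(x,t) < p ∈ H`, there is `w ∈ J` with `G(w,t) = p`. -/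
def SolvS1 (J J' H : Set ℝ) (G : ℝ → ℝ → ℝ) : Prop :=
  ∀ x ∈ J, ∀ t ∈ J', ∀ p ∈ H, G x t < p → ∃ w ∈ J, G w t = p

/-- Solvability condition [S2]: `G` is `x₀`-solvable, i.e. for every `p ∈ H` there is
`v ∈ J'` with `G(x₀,v) = p`. -/
def X0Solvable (J J' H : Set ℝ) (G : ℝ → ℝ → ℝ) (x₀ : ℝ) : Prop :=
  x₀ ∈ J ∧ ∀ p ∈ H, ∃ v ∈ J', G x₀ v = p

/-- `G` is permutable: `G(G(x,s),t) = G(G(x,t),s)`. -/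
def Permutable (J J' : Set ℝ) (G : ℝ → ℝ → ℝ) : Prop :=
  ∀ x ∈ J, ∀ s ∈ J', ∀ t ∈ J', G (G x s) t = G (G x t) s

theorem bullet_comm_general (J J' : Set ℝ) (G : ℝ → ℝ → ℝ) (x₀ : ℝ) (bull : ℝ → ℝ → ℝ)
    (hS2 : X0Solvable J J' J G x₀)
    (hperm : Permutable J J' G)
    (hbull : ∀ x ∈ J, ∀ y ∈ J, ∀ v ∈ J', G x₀ v = y → bull x y = G x v) :
    ∀ x ∈ J, ∀ y ∈ J, bull x y = bull y x := by
  intro x hx y hy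
  obtain ⟨hx₀, hsolve⟩ := hS2
  obtain ⟨u, hu, rfl⟩ := hsolve x hx
  obtain ⟨v, hv, rfl⟩ := hsolve y hy
  calc bull (G x₀ u) (G x₀ v) = G (G x₀ u) v := hbull _ hx _ hy v hv rfl
    _ = G (G x₀ v) u := hperm x₀ hx₀ u hu v hv
    _ = bull (G x₀ v) (G x₀ u) := (hbull _ hy _ hx u hu rfl).symm

/-- For a solvable permutable code `G`, the operation `x ∙ y = G(x,v)` (where
`G(x₀,v) = y`) is commutative. -/
theorem bullet_comm (J J' : Set ℝ) (G : ℝ → ℝ → ℝ) (x₀ : ℝ) (bull : ℝ → ℝ → ℝ)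
    (hJ : NondegNonnegInterval J) (hJ' : NondegNonnegInterval J')
    (hcode : IsCode J J' J G)
    (hS1 : SolvS1 J J' J G) (hS2 : X0Solvable J J' J G x₀)
    (hperm : Permutable J J' G)
    (hbull : ∀ x ∈ J, ∀ y ∈ J, ∀ v ∈ J', G x₀ v = y → bull x y = G x v) :
    ∀ x ∈ J, ∀ y ∈ J, bull x y = bull y x :=
  bullet_comm_general J J' G x₀ bull hS2 hperm hbull
end

section
/- Let G : J × J' → J be a solvable permutable code that is x₀-solvable, and define the operation ∙ on J by x ∙ y = G(x,v) where v is the unique element of J' with G(x₀,v) = y. Then ∙ is associative: x ∙ (y ∙ z) = (x ∙ y) ∙ z for all x,y,z ∈ J. -/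
section Bullet

variable {J J' : Set ℝ} {G bull : ℝ → ℝ → ℝ} {x₀ : ℝ}

theorem bull_mem (hG : ∀ x ∈ J, ∀ s ∈ J', G x s ∈ J) (hS2 : X0Solvable J J' J G x₀)
    (hbull : ∀ x ∈ J, ∀ y ∈ J, ∀ v ∈ J', G x₀ v = y → bull x y = G x v)
    {y z : ℝ} (hy : y ∈ J) (hz : z ∈ J) : bull y z ∈ J := by
  obtain ⟨v, hv, hzv⟩ := hS2.2 z hz
  rw [hbull y hy z hz v hv hzv]
  exact hG y hy v hv

theorem bull_G_x₀_left (hG : ∀ x ∈ J, ∀ s ∈ J', G x s ∈ J) (hS2 : X0Solvable J J' J G x₀)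
    (hperm : Permutable J J' G)
    (hbull : ∀ x ∈ J, ∀ y ∈ J, ∀ v ∈ J', G x₀ v = y → bull x y = G x v)
    {s y : ℝ} (hs : s ∈ J') (hy : y ∈ J) : bull (G x₀ s) y = G y s := by
  obtain ⟨u, hu, rfl⟩ := hS2.2 y hy
  rw [hbull _ (hG x₀ hS2.1 s hs) _ hy u hu rfl, hperm x₀ hS2.1 s hs u hu]

end Bullet

theorem bullet_assoc_general (J J' : Set ℝ) (G : ℝ → ℝ → ℝ) (x₀ : ℝ) (bull : ℝ → ℝ → ℝ)
    (hcode : IsCode J J' J G)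
    (hS2 : X0Solvable J J' J G x₀)
    (hperm : Permutable J J' G)
    (hbull : ∀ x ∈ J, ∀ y ∈ J, ∀ v ∈ J', G x₀ v = y → bull x y = G x v) :
    ∀ x ∈ J, ∀ y ∈ J, ∀ z ∈ J, bull x (bull y z) = bull (bull x y) z := by
  have hG := hcode.1
  intro x hx y hy z hz
  obtain ⟨s, hs, rfl⟩ := hS2.2 x hx
  obtain ⟨v, hv, rfl⟩ := hS2.2 z hz
  calc bull (G x₀ s) (bull y (G x₀ v))
      = G (bull y (G x₀ v)) s :=
        bull_G_x₀_left hG hS2 hperm hbull hs (bull_mem hG hS2 hbull hy hz)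
    _ = G (G y v) s := by rw [hbull y hy _ hz v hv rfl]
    _ = G (G y s) v := (hperm y hy s hs v hv).symm
    _ = bull (G y s) (G x₀ v) := (hbull _ (hG y hy s hs) _ hz v hv rfl).symm
    _ = bull (bull (G x₀ s) y) (G x₀ v) := by rw [bull_G_x₀_left hG hS2 hperm hbull hs hy]

/-- For a solvable permutable code `G`, the operation `x ∙ y = G(x,v)` (where
`G(x₀,v) = y`) is associative. -/
theorem bullet_assoc (J J' : Set ℝ) (G : ℝ → ℝ → ℝ) (x₀ : ℝ) (bull : ℝ → ℝ → ℝ)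
    (hJ : NondegNonnegInterval J) (hJ' : NondegNonnegInterval J')
    (hcode : IsCode J J' J G)
    (hS1 : SolvS1 J J' J G) (hS2 : X0Solvable J J' J G x₀)
    (hperm : Permutable J J' G)
    (hbull : ∀ x ∈ J, ∀ y ∈ J, ∀ v ∈ J', G x₀ v = y → bull x y = G x v) :
    ∀ x ∈ J, ∀ y ∈ J, ∀ z ∈ J, bull x (bull y z) = bull (bull x y) z :=
  bullet_assoc_general J J' G x₀ bull hcode hS2 hperm hbull
end

section
/- Let G : J × J' → J be a solvable permutable code that is x₀-solvable, and define the operation ∙ on J by x ∙ y = G(x,v) where v is the unique element of J' with G(x₀,v) = y. Then for all x,y,y',z,z',w ∈ J: if y ∙ x = w ∙ z and w ∙ y' = z' ∙ x, then y ∙ y' = z' ∙ z. -/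
open Set

/-- Permuting the second arguments shows that `G (G y b) a = G (G z' c) a`; then cancel `a`. -/
theorem Permutable.thomsen_condition {J J' : Set ℝ} {G : ℝ → ℝ → ℝ} (hperm : Permutable J J' G)
    (hmaps : ∀ x ∈ J, ∀ s ∈ J', G x s ∈ J) (hinj : ∀ s ∈ J', InjOn (fun x => G x s) J)
    {y w z' a b c : ℝ} (hy : y ∈ J) (hw : w ∈ J) (hz' : z' ∈ J)
    (ha : a ∈ J') (hb : b ∈ J') (hc : c ∈ J')
    (h₁ : G y a = G w c) (h₂ : G w b = G z' a) : G y b = G z' c := by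
  refine hinj a ha (hmaps y hy b hb) (hmaps z' hz' c hc) ?_
  calc G (G y b) a = G (G y a) b := hperm y hy b hb a ha
    _ = G (G w c) b := by rw [h₁]
    _ = G (G w b) c := hperm w hw c hc b hb
    _ = G (G z' a) c := by rw [h₂]
    _ = G (G z' c) a := hperm z' hz' a ha c hc

theorem bullet_condition_ii_general (J J' : Set ℝ) (G : ℝ → ℝ → ℝ) (x₀ : ℝ) (bull : ℝ → ℝ → ℝ)
    (hcode : IsCode J J' J G)
    (hS2 : X0Solvable J J' J G x₀)
    (hperm : Permutable J J' G)
    (hbull : ∀ x ∈ J, ∀ y ∈ J, ∀ v ∈ J', G x₀ v = y → bull x y = G x v) :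
    ∀ x ∈ J, ∀ y ∈ J, ∀ y' ∈ J, ∀ z ∈ J, ∀ z' ∈ J, ∀ w ∈ J,
      bull y x = bull w z → bull w y' = bull z' x → bull y y' = bull z' z := by
  intro x hx y hy y' hy' z hz z' hz' w hw h₁ h₂
  obtain ⟨a, ha, rfl⟩ := hS2.2 x hx
  obtain ⟨b, hb, rfl⟩ := hS2.2 y' hy'
  obtain ⟨c, hc, rfl⟩ := hS2.2 z hz
  rw [hbull _ hy _ hx a ha rfl, hbull _ hw _ hz c hc rfl] at h₁
  rw [hbull _ hw _ hy' b hb rfl, hbull _ hz' _ hx a ha rfl] at h₂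
  rw [hbull _ hy _ hy' b hb rfl, hbull _ hz' _ hz c hc rfl]
  exact hperm.thomsen_condition hcode.1 (fun s hs => (hcode.2.2.1 s hs).injOn)
    hy hw hz' ha hb hc h₁ h₂

/-- For a solvable permutable code `G`, the operation `x ∙ y = G(x,v)` (where
`G(x₀,v) = y`) satisfies the cancellation-type condition (ii):
if `y ∙ x = w ∙ z` and `w ∙ y' = z' ∙ x` then `y ∙ y' = z' ∙ z`. -/
theorem bullet_condition_ii (J J' : Set ℝ) (G : ℝ → ℝ → ℝ) (x₀ : ℝ) (bull : ℝ → ℝ → ℝ)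
    (hJ : NondegNonnegInterval J) (hJ' : NondegNonnegInterval J')
    (hcode : IsCode J J' J G)
    (hS1 : SolvS1 J J' J G) (hS2 : X0Solvable J J' J G x₀)
    (hperm : Permutable J J' G)
    (hbull : ∀ x ∈ J, ∀ y ∈ J, ∀ v ∈ J', G x₀ v = y → bull x y = G x v) :
    ∀ x ∈ J, ∀ y ∈ J, ∀ y' ∈ J, ∀ z ∈ J, ∀ z' ∈ J, ∀ w ∈ J,
      bull y x = bull w z → bull w y' = bull z' x → bull y y' = bull z' z :=
  bullet_condition_ii_general J J' G x₀ bull hcode hS2 hperm hbull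
end

section
/- Let G : J × J' → J be a solvable permutable code that is x₀-solvable, and define the operation ∙ on J by x ∙ y = G(x,v) where v is the unique element of J' with G(x₀,v) = y. Then for all x,y,z ∈ J: if x ∙ y < z, then there exists w ∈ J with x ∙ w = z. -/
/-- Permutability turns `x ∙ y = G(G(x₀,u), v)` into `G(G(x₀,v), u) = G(y,u)`. -/
theorem bull_eq_of_permutable {J J' : Set ℝ} {G : ℝ → ℝ → ℝ} {x₀ : ℝ} {bull : ℝ → ℝ → ℝ}
    (hS2 : X0Solvable J J' J G x₀) (hperm : Permutable J J' G)
    (hbull : ∀ x ∈ J, ∀ y ∈ J, ∀ v ∈ J', G x₀ v = y → bull x y = G x v)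
    {x u : ℝ} (hx : x ∈ J) (hu : u ∈ J') (hxu : G x₀ u = x) {y : ℝ} (hy : y ∈ J) :
    bull x y = G y u := by
  obtain ⟨v, hv, hyv⟩ := hS2.2 y hy
  calc bull x y = G x v := hbull x hx y hy v hv hyv
    _ = G (G x₀ u) v := by rw [hxu]
    _ = G (G x₀ v) u := hperm x₀ hS2.1 u hu v hv
    _ = G y u := by rw [hyv]

theorem bullet_solvable_general (J J' : Set ℝ) (G : ℝ → ℝ → ℝ) (x₀ : ℝ) (bull : ℝ → ℝ → ℝ)
    (hS1 : SolvS1 J J' J G) (hS2 : X0Solvable J J' J G x₀)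
    (hperm : Permutable J J' G)
    (hbull : ∀ x ∈ J, ∀ y ∈ J, ∀ v ∈ J', G x₀ v = y → bull x y = G x v) :
    ∀ x ∈ J, ∀ y ∈ J, ∀ z ∈ J, bull x y < z → ∃ w ∈ J, bull x w = z := by
  intro x hx y hy z hz hlt
  obtain ⟨u, hu, hxu⟩ := hS2.2 x hx
  have bull_eq : ∀ y ∈ J, bull x y = G y u :=
    fun y hy => bull_eq_of_permutable hS2 hperm hbull hx hu hxu hy
  obtain ⟨w, hw, hwz⟩ := hS1 y hy u hu z hz (bull_eq y hy ▸ hlt)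
  exact ⟨w, hw, (bull_eq w hw).trans hwz⟩

/-- For a solvable permutable code `G`, the operation `x ∙ y = G(x,v)` (where
`G(x₀,v) = y`) satisfies the solvability condition (iv):
if `x ∙ y < z` then `x ∙ w = z` for some `w ∈ J`. -/
theorem bullet_solvable (J J' : Set ℝ) (G : ℝ → ℝ → ℝ) (x₀ : ℝ) (bull : ℝ → ℝ → ℝ)
    (hJ : NondegNonnegInterval J) (hJ' : NondegNonnegInterval J')
    (hcode : IsCode J J' J G)
    (hS1 : SolvS1 J J' J G) (hS2 : X0Solvable J J' J G x₀)
    (hperm : Permutable J J' G)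
    (hbull : ∀ x ∈ J, ∀ y ∈ J, ∀ v ∈ J', G x₀ v = y → bull x y = G x v) :
    ∀ x ∈ J, ∀ y ∈ J, ∀ z ∈ J, bull x y < z → ∃ w ∈ J, bull x w = z :=
  bullet_solvable_general J J' G x₀ bull hS1 hS2 hperm hbull
end

section
/- Let G : J × J' → J be a solvable permutable code that is x₀-solvable and strictly decreasing in its second variable, and define the operation ∙ on J by x ∙ y = G(x,v) where v is the unique element of J' with G(x₀,v) = y. Fix x,y ∈ J with x < y, and define the sequence (x_y^n) recursively by x_y^1 = x and, whenever x_y^{n-1} is defined and there exists x' ∈ J with y ∙ x_y^{n-1} = x ∙ x', by x_y^n = x'. Then this sequence is strictly increasing: x_y^{n-1} < x_y^n whenever both terms are defined; in particular x_y^2 = y. -/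
/-- The partial recursive sequence `x_y^n` built from the operation `∙`:
`x_y^1 = x`, and `x_y^n = x'` whenever `x_y^{n-1} = a` is defined and `x' ∈ J`
satisfies `y ∙ a = x ∙ x'`. -/
inductive BulletSeq (J : Set ℝ) (bull : ℝ → ℝ → ℝ) (x y : ℝ) : ℕ → ℝ → Prop
  | one : BulletSeq J bull x y 1 x
  | succ {n : ℕ} {a x' : ℝ} : BulletSeq J bull x y n a → x' ∈ J →
      bull y a = bull x x' → BulletSeq J bull x y (n + 1) x'

/-!
Every `w ∈ J` is `G(x₀, v)` for a unique `v`, so `u ∙ w = G(u, v)` inherits from `G` strict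
monotonicity in `u`, and, since `G` decreases in its second variable both in `w = G(x₀, v)` and
in `G(u, v)`, strict monotonicity in `w` as well. Permutability of `G` makes `∙` commutative.
Injectivity of `x ∙ ·` makes the recursion single-valued, and then `x ∙ x_y^n = y ∙ x_y^{n-1} > x ∙ x_y^{n-1}` gives `x_y^n > x_y^{n-1}`, and
`x ∙ x_y^2 = y ∙ x = x ∙ y` gives `x_y^2 = y`.
-/

namespace BulletSeq

variable {J : Set ℝ} {bull : ℝ → ℝ → ℝ} {x y : ℝ}

theorem mem (hx : x ∈ J) {n : ℕ} {a : ℝ} : BulletSeq J bull x y n a → a ∈ J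
  | one => hx
  | succ _ ha _ => ha

theorem unique (hinj : Set.InjOn (bull x) J) {n : ℕ} {a a' : ℝ}
    (h : BulletSeq J bull x y n a) (h' : BulletSeq J bull x y n a') : a = a' := by
  induction h generalizing a' with
  | one =>
    cases h' with
    | one => rfl
    | succ h' _ _ => cases h'
  | succ h ha heq ih =>
    cases h' with
    | one => cases h
    | succ h' ha' heq' =>
      obtain rfl := ih h'
      exact hinj ha ha' (heq.symm.trans heq')

theorem lt_of_succ (hx : x ∈ J) (hmono : StrictMonoOn (bull x) J)
    (hlt : ∀ a ∈ J, bull x a < bull y a) {n : ℕ} {a b : ℝ}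
    (ha : BulletSeq J bull x y n a) (hb : BulletSeq J bull x y (n + 1) b) : a < b := by
  cases hb with
  | one => cases ha
  | succ hc hbJ heq =>
    obtain rfl := unique hmono.injOn ha hc
    have haJ := ha.mem hx
    exact (hmono.lt_iff_lt haJ hbJ).1 (heq ▸ hlt a haJ)

theorem eq_of_two (hinj : Set.InjOn (bull x) J) (hy : y ∈ J) (hcomm : bull y x = bull x y)
    {b : ℝ} (hb : BulletSeq J bull x y 2 b) : b = y := by
  obtain _ | ⟨_ | ⟨h, _, _⟩, hbJ, heq⟩ := hb
  · exact hinj hbJ hy (heq.symm.trans hcomm)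
  · cases h

end BulletSeq

def IsBullet (J J' : Set ℝ) (G : ℝ → ℝ → ℝ) (x₀ : ℝ) (bull : ℝ → ℝ → ℝ) : Prop :=
  ∀ u ∈ J, ∀ w ∈ J, ∀ v ∈ J', G x₀ v = w → bull u w = G u v

section IsBullet

variable {J J' : Set ℝ} {G : ℝ → ℝ → ℝ} {x₀ : ℝ} {bull : ℝ → ℝ → ℝ}

theorem IsBullet.strictMonoOn_right (hbull : IsBullet J J' G x₀ bull)
    (hS2 : X0Solvable J J' J G x₀) (hdec : ∀ u ∈ J, StrictAntiOn (fun s => G u s) J')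
    {u : ℝ} (hu : u ∈ J) : StrictMonoOn (bull u) J := by
  intro w hw w' hw' hww'
  obtain ⟨v, hv, rfl⟩ := hS2.2 w hw
  obtain ⟨v', hv', rfl⟩ := hS2.2 _ hw'
  rw [hbull u hu _ hw v hv rfl, hbull u hu _ hw' v' hv' rfl]
  exact hdec u hu hv' hv (((hdec x₀ hS2.1).lt_iff_gt hv hv').1 hww')

theorem IsBullet.lt_left (hbull : IsBullet J J' G x₀ bull) (hS2 : X0Solvable J J' J G x₀)
    (hmono : ∀ s ∈ J', StrictMonoOn (fun x => G x s) J) {u u' w : ℝ}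
    (hu : u ∈ J) (hu' : u' ∈ J) (hw : w ∈ J) (huu' : u < u') : bull u w < bull u' w := by
  obtain ⟨v, hv, rfl⟩ := hS2.2 w hw
  rw [hbull u hu _ hw v hv rfl, hbull u' hu' _ hw v hv rfl]
  exact hmono v hv hu hu' huu'

theorem IsBullet.comm (hbull : IsBullet J J' G x₀ bull) (hS2 : X0Solvable J J' J G x₀)
    (hperm : Permutable J J' G) {u w : ℝ} (hu : u ∈ J) (hw : w ∈ J) : bull u w = bull w u := by
  obtain ⟨vu, hvu, rfl⟩ := hS2.2 u hu
  obtain ⟨vw, hvw, rfl⟩ := hS2.2 w hw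
  rw [hbull _ hu _ hw vw hvw rfl, hbull _ hw _ hu vu hvu rfl]
  exact hperm x₀ hS2.1 vu hvu vw hvw

end IsBullet

theorem bullet_seq_strictMono_general (J J' : Set ℝ) (G : ℝ → ℝ → ℝ) (x₀ : ℝ)
    (bull : ℝ → ℝ → ℝ) (x y : ℝ)
    (hcode : IsCode J J' J G)
    (hdec : ∀ u ∈ J, StrictAntiOn (fun s => G u s) J')
    (hS2 : X0Solvable J J' J G x₀)
    (hperm : Permutable J J' G)
    (hbull : ∀ u ∈ J, ∀ w ∈ J, ∀ v ∈ J', G x₀ v = w → bull u w = G u v)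
    (hx : x ∈ J) (hy : y ∈ J) (hxy : x < y) :
    (∀ n : ℕ, ∀ a b : ℝ, BulletSeq J bull x y n a → BulletSeq J bull x y (n + 1) b →
      a < b) ∧
    (∀ b : ℝ, BulletSeq J bull x y 2 b → b = y) := by
  have hbull : IsBullet J J' G x₀ bull := hbull
  have hmono : StrictMonoOn (bull x) J := hbull.strictMonoOn_right hS2 hdec hx
  have hlt : ∀ a ∈ J, bull x a < bull y a := fun a ha =>
    hbull.lt_left hS2 hcode.2.2.1 hx hy ha hxy
  exact ⟨fun _ _ _ ha hb => ha.lt_of_succ hx hmono hlt hb,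
    fun _ hb => hb.eq_of_two hmono.injOn hy (hbull.comm hS2 hperm hy hx)⟩

/-- For a solvable permutable code `G` strictly decreasing in its second variable,
taking `x < y` in `J`, the sequence `(x_y^n)` is strictly increasing, and
`x_y^2 = y`. -/
theorem bullet_seq_strictMono (J J' : Set ℝ) (G : ℝ → ℝ → ℝ) (x₀ : ℝ)
    (bull : ℝ → ℝ → ℝ) (x y : ℝ)
    (hJ : NondegNonnegInterval J) (hJ' : NondegNonnegInterval J')
    (hcode : IsCode J J' J G)
    (hdec : ∀ u ∈ J, StrictAntiOn (fun s => G u s) J')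
    (hS1 : SolvS1 J J' J G) (hS2 : X0Solvable J J' J G x₀)
    (hperm : Permutable J J' G)
    (hbull : ∀ u ∈ J, ∀ w ∈ J, ∀ v ∈ J', G x₀ v = w → bull u w = G u v)
    (hx : x ∈ J) (hy : y ∈ J) (hxy : x < y) :
    (∀ n : ℕ, ∀ a b : ℝ, BulletSeq J bull x y n a → BulletSeq J bull x y (n + 1) b →
      a < b) ∧
    (∀ b : ℝ, BulletSeq J bull x y 2 b → b = y) :=
  bullet_seq_strictMono_general J J' G x₀ bull x y hcode hdec hS2 hperm hbull hx hy hxy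
end

section
/- Let G : J × J' → J be a solvable permutable code that is x₀-solvable, and define the operation ∙ on J by x ∙ y = G(x,v) where v is the unique element of J' with G(x₀,v) = y. Then ∙ is continuous and strictly increasing in both variables. -/
open Set

theorem MonotoneOn.continuousOn_of_ordConnected_image {α β : Type*} [LinearOrder α]
    [TopologicalSpace α] [OrderTopology α] [LinearOrder β] [TopologicalSpace β] [OrderTopology β]
    [DenselyOrdered β] {f : α → β} {s : Set α} [s.OrdConnected] [(f '' s).OrdConnected]
    (hf : MonotoneOn f s) : ContinuousOn f s := by
  have hmono : Monotone (imageFactorization f s) := fun a b hab => hf a.2 b.2 hab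
  rw [continuousOn_iff_continuous_domRestrict]
  exact continuous_subtype_val.comp (hmono.continuous_of_surjective imageFactorization_surjective)

namespace IsCode

variable {J J' H : Set ℝ} {G : ℝ → ℝ → ℝ}

theorem lt_iff_lt_left (hG : IsCode J J' H G) {x x' s t : ℝ} (hx : x ∈ J) (hx' : x' ∈ J)
    (hs : s ∈ J') (ht : t ∈ J') : G x s < G x t ↔ G x' s < G x' t := by
  rcases hG.2.2.2.1 with hmono | hanti
  · rw [(hmono x hx).lt_iff_lt hs ht, (hmono x' hx').lt_iff_lt hs ht]
  · rw [(hanti x hx).lt_iff_gt hs ht, (hanti x' hx').lt_iff_gt hs ht]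

theorem injOn_right (hG : IsCode J J' H G) {x : ℝ} (hx : x ∈ J) : InjOn (G x) J' := by
  rcases hG.2.2.2.1 with hmono | hanti
  · exact (hmono x hx).injOn
  · exact (hanti x hx).injOn

theorem ordConnected_image_right (hG : IsCode J J' H G) (hJ' : J'.OrdConnected) {x : ℝ}
    (hx : x ∈ J) : (G x '' J').OrdConnected :=
  (hJ'.isPreconnected.image _ (hG.2.2.2.2.2 x hx)).ordConnected

section Reparametrized

variable {x₀ : ℝ} {v : ℝ → ℝ}

theorem strictMonoOn_reparam (hG : IsCode J J' H G) (hx₀ : x₀ ∈ J)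
    (hvJ' : ∀ y ∈ J, v y ∈ J') (hvG : ∀ y ∈ J, G x₀ (v y) = y) {x : ℝ} (hx : x ∈ J) :
    StrictMonoOn (fun y => G x (v y)) J := by
  intro a ha b hb hab
  rw [← hvG a ha, ← hvG b hb] at hab
  exact (hG.lt_iff_lt_left hx₀ hx (hvJ' a ha) (hvJ' b hb)).mp hab

theorem image_reparam (hG : IsCode J J' J G) (hx₀ : x₀ ∈ J)
    (hvJ' : ∀ y ∈ J, v y ∈ J') (hvG : ∀ y ∈ J, G x₀ (v y) = y) (x : ℝ) :
    (fun y => G x (v y)) '' J = G x '' J' := by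
  refine Subset.antisymm (image_subset_iff.mpr fun y hy => mem_image_of_mem _ (hvJ' y hy)) ?_
  rintro _ ⟨w, hw, rfl⟩
  have hyJ : G x₀ w ∈ J := hG.1 x₀ hx₀ w hw
  have hvw : v (G x₀ w) = w := hG.injOn_right hx₀ (hvJ' _ hyJ) hw (hvG _ hyJ)
  exact ⟨G x₀ w, hyJ, congrArg (G x) hvw⟩

theorem continuousOn_reparam (hG : IsCode J J' J G) (hJ : J.OrdConnected)
    (hJ' : J'.OrdConnected) (hx₀ : x₀ ∈ J) (hvJ' : ∀ y ∈ J, v y ∈ J')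
    (hvG : ∀ y ∈ J, G x₀ (v y) = y) {x : ℝ} (hx : x ∈ J) :
    ContinuousOn (fun y => G x (v y)) J := by
  have : ((fun y => G x (v y)) '' J).OrdConnected := by
    rw [hG.image_reparam hx₀ hvJ' hvG x]
    exact hG.ordConnected_image_right hJ' hx
  exact (hG.strictMonoOn_reparam hx₀ hvJ' hvG hx).monotoneOn.continuousOn_of_ordConnected_image

end Reparametrized

end IsCode

theorem bullet_continuous_strictMono_general (J J' : Set ℝ) (G : ℝ → ℝ → ℝ) (x₀ : ℝ)
    (bull : ℝ → ℝ → ℝ)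
    (hJ : NondegNonnegInterval J) (hJ' : NondegNonnegInterval J')
    (hcode : IsCode J J' J G)
    (hS2 : X0Solvable J J' J G x₀)
    (hbull : ∀ x ∈ J, ∀ y ∈ J, ∀ v ∈ J', G x₀ v = y → bull x y = G x v) :
    (∀ y ∈ J, StrictMonoOn (fun x => bull x y) J) ∧
    (∀ x ∈ J, StrictMonoOn (fun y => bull x y) J) ∧
    (∀ y ∈ J, ContinuousOn (fun x => bull x y) J) ∧
    (∀ x ∈ J, ContinuousOn (fun y => bull x y) J) := by
  obtain ⟨hx₀, hsolv⟩ := hS2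
  choose! v hvJ' hvG using hsolv
  have hbull_eq : ∀ x ∈ J, ∀ y ∈ J, bull x y = G x (v y) := fun x hx y hy =>
    hbull x hx y hy _ (hvJ' y hy) (hvG y hy)
  refine ⟨fun y hy => ?_, fun x hx => ?_, fun y hy => ?_, fun x hx => ?_⟩
  · exact (hcode.2.2.1 (v y) (hvJ' y hy)).congr fun x hx => (hbull_eq x hx y hy).symm
  · exact (hcode.strictMonoOn_reparam hx₀ hvJ' hvG hx).congr fun y hy =>
      (hbull_eq x hx y hy).symm
  · exact (hcode.2.2.2.2.1 (v y) (hvJ' y hy)).congr fun x hx => hbull_eq x hx y hy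
  · exact (hcode.continuousOn_reparam hJ.1 hJ'.1 hx₀ hvJ' hvG hx).congr fun y hy =>
      hbull_eq x hx y hy

/-- For a solvable permutable code `G`, the operation `x ∙ y = G(x,v)` (where
`G(x₀,v) = y`) is continuous and strictly increasing in both variables. -/
theorem bullet_continuous_strictMono (J J' : Set ℝ) (G : ℝ → ℝ → ℝ) (x₀ : ℝ)
    (bull : ℝ → ℝ → ℝ)
    (hJ : NondegNonnegInterval J) (hJ' : NondegNonnegInterval J')
    (hcode : IsCode J J' J G)
    (hS1 : SolvS1 J J' J G) (hS2 : X0Solvable J J' J G x₀)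
    (hperm : Permutable J J' G)
    (hbull : ∀ x ∈ J, ∀ y ∈ J, ∀ v ∈ J', G x₀ v = y → bull x y = G x v) :
    (∀ y ∈ J, StrictMonoOn (fun x => bull x y) J) ∧
    (∀ x ∈ J, StrictMonoOn (fun y => bull x y) J) ∧
    (∀ y ∈ J, ContinuousOn (fun x => bull x y) J) ∧
    (∀ x ∈ J, ContinuousOn (fun y => bull x y) J) :=
  bullet_continuous_strictMono_general J J' G x₀ bull hJ hJ' hcode hS2 hbull
end

section
/- A solvable code G : J × J' → J is permutable if and only if there exist continuous functions f : J → ℝ and g : J' → ℝ, with f strictly increasing and g strictly monotonic, such that G(y,r) = f⁻¹(f(y) + g(r)) for all y ∈ J and r ∈ J' (in particular f(y) + g(r) lies in the range of f for all such y, r). -/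
/-!
Permutability makes `p ⊕ q := G(p, s)`, for any `s` with `G(x₀, s) = q`, a well-defined
commutative and associative operation on `J` with unit `x₀`, and `G(y, r) = y ⊕ G(x₀, r)`.
Solvability and the completeness of `J` make `(J, ⊕)` an Archimedean ordered cancellative
monoid in which `p < q` always has a difference `q = d ⊕ p`, so by Hölder's theorem (applied
to its Grothendieck group) there is a strictly increasing additive `f : (J, ⊕) → (ℝ, +)`.
As `J` is a nondegenerate interval, `f` has arbitrarily small positive values, which forces
`f(J)` to be an interval; hence `f` is continuous. Finally `g := f ∘ G(x₀, ·)`.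
-/

open Algebra Set

namespace Algebra.GrothendieckAddGroup

variable {M : Type*} [AddCommMonoid M]

theorem exists_eq_of_sub_of (x : GrothendieckAddGroup M) : ∃ a b : M, x = of a - of b := by
  obtain ⟨a, b, rfl⟩ := (AddLocalization.addMonoidOf (⊤ : AddSubmonoid M)).mk'_surjective x
  exact ⟨a, b, eq_sub_of_add_eq ((AddLocalization.addMonoidOf _).mk'_spec a b)⟩

variable [LinearOrder M] [IsOrderedCancelAddMonoid M]

theorem of_le_of {a b : M} : of a ≤ of b ↔ a ≤ b := by
  simp only [AddSubmonoid.LocalizationMap.toAddMonoidHom_apply,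
    ← AddLocalization.mk_zero_eq_addMonoidOf_mk, AddLocalization.mk_le_mk]
  simp

theorem of_strictMono : StrictMono (of (M := M)) :=
  strictMono_of_le_iff_le fun _ _ => of_le_of.symm

variable [ExistsAddOfLE M] [Archimedean M]

instance : Archimedean (GrothendieckAddGroup M) := by
  refine ⟨fun x y hy => ?_⟩
  obtain ⟨a, b, rfl⟩ := exists_eq_of_sub_of x
  obtain ⟨c, d, rfl⟩ := exists_eq_of_sub_of y
  obtain ⟨z, rfl⟩ := exists_add_of_le (of_le_of.1 (sub_pos.1 hy).le)
  have hz : 0 < z := by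
    rwa [map_add, add_sub_cancel_left, ← map_zero of, of_strictMono.lt_iff_lt] at hy
  -- a negative `b` has an additive inverse `b'`
  obtain ⟨b', hb'⟩ : ∃ b', 0 ≤ b + b' := by
    rcases le_total 0 b with hb | hb
    · exact ⟨0, by simpa⟩
    · obtain ⟨b', hb'⟩ := exists_add_of_le hb
      exact ⟨b', hb'.le⟩
  obtain ⟨n, hn⟩ := Archimedean.arch (a + b') hz
  refine ⟨n, ?_⟩
  rw [map_add, add_sub_cancel_left, ← map_nsmul, sub_le_iff_le_add, ← map_add, of_le_of]
  calc a ≤ a + (b + b') := le_add_of_nonneg_right hb'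
    _ = (a + b') + b := by abel
    _ ≤ n • z + b := by gcongr

end Algebra.GrothendieckAddGroup

theorem exists_addMonoidHom_real_strictMono (M : Type*) [AddCommMonoid M] [LinearOrder M]
    [IsOrderedCancelAddMonoid M] [ExistsAddOfLE M] [Archimedean M] :
    ∃ f : M →+ ℝ, StrictMono f := by
  obtain ⟨φ, hφ⟩ := Archimedean.exists_orderAddMonoidHom_real_injective (GrothendieckAddGroup M)
  exact ⟨(φ : GrothendieckAddGroup M →+ ℝ).comp GrothendieckAddGroup.of,
    (φ.monotone'.strictMono_of_injective hφ).comp GrothendieckAddGroup.of_strictMono⟩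

theorem StrictMonoOn.continuousOn_of_image_ordConnected {α β : Type*} [LinearOrder α]
    [TopologicalSpace α] [OrderTopology α] [LinearOrder β] [TopologicalSpace β] [OrderTopology β]
    {f : α → β} {s : Set α} (hf : StrictMonoOn f s) (hs : s.OrdConnected)
    (hfs : (f '' s).OrdConnected) : ContinuousOn f s := by
  rw [continuousOn_iff_continuous_domRestrict]
  have hmono : StrictMono (s.domRestrict f) := fun a b hab => hf a.2 b.2 hab
  exact (hmono.isEmbedding_of_ordConnected (by rwa [range_domRestrict])).continuous

theorem exists_lt_sub_lt_of_ordConnected {f : ℝ → ℝ} {s : Set ℝ} (hs : s.OrdConnected)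
    (hne : s.Nontrivial) {ε : ℝ} (hε : 0 < ε) : ∃ p ∈ s, ∃ q ∈ s, p < q ∧ f q - f p < ε := by
  by_contra! hsep
  obtain ⟨a, ha, b, hb, hab⟩ := hne.exists_lt
  obtain ⟨N, hN⟩ := exists_nat_gt ((f b - f a) / ε)
  -- the grid `t 0 = a < t 1 < ⋯ < t (N + 1) = b` forces `f b - f a ≥ (N + 1) ε`
  set t : ℕ → ℝ := fun k => a + k * (b - a) / (N + 1)
  have ht : ∀ k ≤ N + 1, t k ∈ s := by
    intro k hk
    have hk' : (k : ℝ) ≤ N + 1 := by exact_mod_cast hk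
    refine hs.out ha hb ⟨?_, ?_⟩ <;> simp only [t]
    · have : 0 ≤ k * (b - a) / (N + 1) := by positivity
      linarith
    · rw [add_comm, ← le_sub_iff_add_le, div_le_iff₀ (by positivity)]
      nlinarith
  have hstep : ∀ k ≤ N + 1, f a + k * ε ≤ f (t k) := by
    intro k hk
    induction k with
    | zero => simp [t]
    | succ k ih =>
      have := hsep _ (ht k (by omega)) _ (ht (k + 1) hk) (by simp only [t]; gcongr; simp)
      push_cast
      linarith [ih (by omega)]
  have hb : t (N + 1) = b := by simp only [t]; field_simp; push_cast; ring
  have := hstep (N + 1) le_rfl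
  rw [hb, div_lt_iff₀ hε] at *
  push_cast at this
  linarith

structure IsSolvableMonoidOp (J : Set ℝ) (H : ℝ → ℝ → ℝ) (e : ℝ) : Prop where
  ordConnected : J.OrdConnected
  unit_mem : e ∈ J
  mem : ∀ p ∈ J, ∀ q ∈ J, H p q ∈ J
  comm : ∀ p ∈ J, ∀ q ∈ J, H p q = H q p
  assoc : ∀ p ∈ J, ∀ q ∈ J, ∀ r ∈ J, H (H p q) r = H p (H q r)
  op_unit : ∀ p ∈ J, H p e = p
  strictMonoOn : ∀ q ∈ J, StrictMonoOn (fun p => H p q) J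
  solvable : ∀ p ∈ J, ∀ q ∈ J, ∀ b ∈ J, H p q < b → ∃ w ∈ J, H w q = b

namespace IsSolvableMonoidOp

variable {J : Set ℝ} {H : ℝ → ℝ → ℝ} {e : ℝ} (h : IsSolvableMonoidOp J H e)
include h

theorem unit_op {p : ℝ} (hp : p ∈ J) : H e p = p :=
  (h.comm _ h.unit_mem _ hp).trans (h.op_unit _ hp)

theorem exists_op_eq_of_lt {q b : ℝ} (hq : q ∈ J) (hb : b ∈ J) (hqb : q < b) :
    ∃ w ∈ J, H w q = b :=
  h.solvable e h.unit_mem q hq b hb (by rwa [h.unit_op hq])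

abbrev addCommMonoid : AddCommMonoid J :=
  letI : Add J := ⟨fun p q => ⟨H p q, h.mem _ p.2 _ q.2⟩⟩
  letI : Zero J := ⟨⟨e, h.unit_mem⟩⟩
  { add_assoc := fun p q r => Subtype.ext (h.assoc _ p.2 _ q.2 _ r.2)
    zero_add := fun p => Subtype.ext (h.unit_op p.2)
    add_zero := fun p => Subtype.ext (h.op_unit _ p.2)
    add_comm := fun p q => Subtype.ext (h.comm _ p.2 _ q.2)
    nsmul := nsmulRec }

theorem isOrderedCancelAddMonoid : @IsOrderedCancelAddMonoid J h.addCommMonoid _ :=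
  let := h.addCommMonoid
  .of_add_lt_add_left fun a b c hbc => by
    change H a b < H a c
    rw [h.comm _ a.2 _ b.2, h.comm _ a.2 _ c.2]
    exact h.strictMonoOn a a.2 b.2 c.2 hbc

theorem existsAddOfLE : @ExistsAddOfLE J h.addCommMonoid.toAdd _ := by
  let := h.addCommMonoid
  refine ⟨fun {a b} hab => ?_⟩
  rcases hab.eq_or_lt with rfl | hlt
  · exact ⟨0, (add_zero a).symm⟩
  obtain ⟨w, hw, hwa⟩ := h.exists_op_eq_of_lt a.2 b.2 hlt
  exact ⟨⟨w, hw⟩, Subtype.ext (hwa.symm.trans (h.comm _ hw _ a.2))⟩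

theorem archimedean : @Archimedean J h.addCommMonoid _ := by
  let := h.addCommMonoid
  have := h.isOrderedCancelAddMonoid
  refine ⟨fun x c hc => ?_⟩
  by_contra! hlt
  -- the supremum `L` of the multiples of `c` is `w + c` with `w < L`, so `w < k • c` gives
  -- `L < (k + 1) • c`
  have hbdd : BddAbove (range fun n : ℕ => ((n • c : J) : ℝ)) :=
    ⟨x, by rintro _ ⟨n, rfl⟩; exact (hlt n).le⟩
  set L := ⨆ n : ℕ, ((n • c : J) : ℝ)
  have hL : L ∈ J :=
    h.ordConnected.out (0 • c).2 x.2 ⟨le_ciSup hbdd 0, ciSup_le fun n => (hlt n).le⟩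
  have hcL : c < ⟨L, hL⟩ := by
    refine lt_of_lt_of_le ?_ (le_ciSup hbdd 2)
    change c < 2 • c
    rw [two_nsmul]
    exact lt_add_of_pos_right c hc
  obtain ⟨w, hw, hwc⟩ := h.exists_op_eq_of_lt c.2 hL hcL
  have hwcL : (⟨w, hw⟩ + c : J) = ⟨L, hL⟩ := Subtype.ext hwc
  have hwL : w < L := by
    change (⟨w, hw⟩ : J) < ⟨L, hL⟩
    rw [← hwcL]
    exact lt_add_of_pos_right _ hc
  obtain ⟨k, hk⟩ := exists_lt_of_lt_ciSup hwL
  have : (⟨L, hL⟩ : J) < (k + 1) • c := by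
    rw [← hwcL, succ_nsmul]
    exact add_lt_add_left (show (⟨w, hw⟩ : J) < k • c from hk) c
  exact this.not_ge (le_ciSup hbdd (k + 1))

theorem exists_strictMonoOn_additive :
    ∃ f : ℝ → ℝ, StrictMonoOn f J ∧ ∀ p ∈ J, ∀ q ∈ J, f (H p q) = f p + f q := by
  let := h.addCommMonoid
  have := h.isOrderedCancelAddMonoid
  have := h.existsAddOfLE
  have := h.archimedean
  obtain ⟨φ, hφ⟩ := exists_addMonoidHom_real_strictMono J
  have hext (p : J) : Function.extend Subtype.val φ 0 p = φ p :=
    Subtype.val_injective.extend_apply φ 0 p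
  refine ⟨Function.extend Subtype.val φ 0, fun p hp q hq hpq => ?_, fun p hp q hq => ?_⟩
  · rw [hext ⟨p, hp⟩, hext ⟨q, hq⟩]
    exact hφ (show (⟨p, hp⟩ : J) < ⟨q, hq⟩ from hpq)
  · rw [hext ⟨p, hp⟩, hext ⟨q, hq⟩, hext ⟨H p q, h.mem p hp q hq⟩]
    exact map_add φ ⟨p, hp⟩ ⟨q, hq⟩

section Additive

variable {f : ℝ → ℝ} (hf : StrictMonoOn f J) (hadd : ∀ p ∈ J, ∀ q ∈ J, f (H p q) = f p + f q)
include hadd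

theorem apply_unit_of_additive : f e = 0 := by
  have := hadd e h.unit_mem e h.unit_mem
  rw [h.op_unit e h.unit_mem] at this
  linarith

include hf

theorem exists_gt_unit_lt_of_additive (hne : J.Nontrivial) {ε : ℝ} (hε : 0 < ε) :
    ∃ d ∈ J, e < d ∧ f d < ε := by
  obtain ⟨p, hp, q, hq, hpq, hfpq⟩ :=
    exists_lt_sub_lt_of_ordConnected (f := f) h.ordConnected hne hε
  obtain ⟨d, hd, hdp⟩ := h.exists_op_eq_of_lt hp hq hpq
  have hfd : f d = f q - f p := by rw [← hdp, hadd d hd p hp]; ring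
  refine ⟨d, hd, (hf.lt_iff_lt h.unit_mem hd).1 ?_, hfd ▸ hfpq⟩
  rw [h.apply_unit_of_additive hadd, hfd, sub_pos]
  exact hf hp hq hpq

theorem ordConnected_image_of_additive (hsmall : ∀ ε > 0, ∃ d ∈ J, e < d ∧ f d < ε) :
    (f '' J).OrdConnected := by
  refine ordConnected_iff.2 ?_
  rintro _ ⟨u, hu, rfl⟩ _ ⟨w, hw, rfl⟩ - y ⟨huy, hyw⟩
  have hpos {d : ℝ} (hd : d ∈ J) (hed : e < d) : 0 < f d :=
    h.apply_unit_of_additive hadd ▸ hf h.unit_mem hd hed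
  -- the value `y` is attained at the supremum `c` of `{t ∈ [u, w] | f t ≤ y}`
  set S := {t ∈ Icc u w | f t ≤ y}
  have hSJ : S ⊆ J := fun t ht => h.ordConnected.out hu hw ht.1
  have huS : u ∈ S := ⟨⟨le_rfl, (hf.le_iff_le hu hw).1 (huy.trans hyw)⟩, huy⟩
  have hSbdd : BddAbove S := ⟨w, fun t ht => ht.1.2⟩
  set c := sSup S
  have hc : c ∈ Icc u w := ⟨le_csSup hSbdd huS, csSup_le ⟨u, huS⟩ fun t ht => ht.1.2⟩
  have hcJ : c ∈ J := h.ordConnected.out hu hw hc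
  refine ⟨c, hcJ, ?_⟩
  rcases lt_trichotomy (f c) y with hlt | heq | hgt
  · obtain ⟨d, hd, hed, hfd⟩ := hsmall (y - f c) (sub_pos.2 hlt)
    have hcdJ := h.mem c hcJ d hd
    have hcd : c < H c d :=
      (hf.lt_iff_lt hcJ hcdJ).1 (by rw [hadd c hcJ d hd]; linarith [hpos hd hed])
    have hcdS : H c d ∈ S :=
      ⟨⟨hc.1.trans hcd.le, (hf.le_iff_le hcdJ hw).1 (by rw [hadd c hcJ d hd]; linarith)⟩,
        by rw [hadd c hcJ d hd]; linarith⟩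
    exact absurd (le_csSup hSbdd hcdS) hcd.not_ge
  · exact heq
  · obtain ⟨d, hd, hed, hfd⟩ := hsmall (f c - y) (sub_pos.2 hgt)
    have hud : H u d < c :=
      (hf.lt_iff_lt (h.mem u hu d hd) hcJ).1 (by rw [hadd u hu d hd]; linarith)
    obtain ⟨t, ht, htd⟩ := h.solvable u hu d hd c hcJ hud
    have hft : f t = f c - f d := by rw [← htd, hadd t ht d hd]; ring
    have htc : t < c := (hf.lt_iff_lt ht hcJ).1 (by linarith [hpos hd hed])
    have hct : c ≤ t := csSup_le ⟨u, huS⟩ fun s hs =>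
      (hf.le_iff_le (hSJ hs) ht).1 (by linarith [hs.2])
    exact absurd hct htc.not_ge

end Additive

theorem exists_continuousOn_strictMonoOn_additive (hne : J.Nontrivial) :
    ∃ f : ℝ → ℝ, ContinuousOn f J ∧ StrictMonoOn f J ∧
      ∀ p ∈ J, ∀ q ∈ J, f (H p q) = f p + f q := by
  obtain ⟨f, hf, hadd⟩ := h.exists_strictMonoOn_additive
  refine ⟨f, hf.continuousOn_of_image_ordConnected h.ordConnected ?_, hf, hadd⟩
  exact h.ordConnected_image_of_additive hf hadd fun ε hε =>
    h.exists_gt_unit_lt_of_additive hf hadd hne hε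

end IsSolvableMonoidOp

noncomputable def codeOp (G : ℝ → ℝ → ℝ) (J' : Set ℝ) (x₀ : ℝ) (p q : ℝ) : ℝ :=
  G p (Function.invFunOn (G x₀) J' q)

section Code

variable {J J' : Set ℝ} {G : ℝ → ℝ → ℝ} {x₀ : ℝ}

theorem X0Solvable.invFunOn_spec (hS2 : X0Solvable J J' J G x₀) {q : ℝ} (hq : q ∈ J) :
    Function.invFunOn (G x₀) J' q ∈ J' ∧ G x₀ (Function.invFunOn (G x₀) J' q) = q :=
  ⟨Function.invFunOn_mem (hS2.2 q hq), Function.invFunOn_eq (hS2.2 q hq)⟩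

variable (hS2 : X0Solvable J J' J G x₀) (hperm : Permutable J J' G)
include hS2 hperm

theorem Permutable.apply_eq_codeOp_swap {p s : ℝ} (hp : p ∈ J) (hs : s ∈ J') :
    G p s = codeOp G J' x₀ (G x₀ s) p := by
  obtain ⟨hvp, hGvp⟩ := hS2.invFunOn_spec hp
  conv_lhs => rw [← hGvp]
  exact hperm x₀ hS2.1 _ hvp s hs

theorem Permutable.codeOp_comm {p q : ℝ} (hp : p ∈ J) (hq : q ∈ J) :
    codeOp G J' x₀ p q = codeOp G J' x₀ q p := by
  obtain ⟨hvq, hGvq⟩ := hS2.invFunOn_spec hq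
  rw [codeOp, hperm.apply_eq_codeOp_swap hS2 hp hvq, hGvq]

theorem Permutable.isSolvableMonoidOp (hJ : J.OrdConnected) (hcode : IsCode J J' J G)
    (hS1 : SolvS1 J J' J G) : IsSolvableMonoidOp J (codeOp G J' x₀) x₀ := by
  have hv := fun q (hq : q ∈ J) => hS2.invFunOn_spec hq
  have hmem : ∀ p ∈ J, ∀ q ∈ J, codeOp G J' x₀ p q ∈ J :=
    fun p hp q hq => hcode.1 p hp _ (hv q hq).1
  have hcomm := fun p hp q hq => hperm.codeOp_comm hS2 (p := p) (q := q) hp hq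
  refine ⟨hJ, hS2.1, hmem, hcomm, fun p hp q hq r hr => ?_, fun p hp => ?_,
    fun q hq => hcode.2.2.1 _ (hv q hq).1, fun p hp q hq => hS1 p hp _ (hv q hq).1⟩
  · calc codeOp G J' x₀ (codeOp G J' x₀ p q) r = codeOp G J' x₀ (codeOp G J' x₀ q p) r := by
          rw [hcomm p hp q hq]
      _ = codeOp G J' x₀ (codeOp G J' x₀ q r) p := hperm q hq _ (hv p hp).1 _ (hv r hr).1
      _ = codeOp G J' x₀ p (codeOp G J' x₀ q r) := hcomm _ (hmem q hq r hr) p hp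
  · rw [hcomm p hp x₀ hS2.1, codeOp, (hv p hp).2]

theorem Permutable.apply_eq_codeOp (hcode : IsCode J J' J G) {y s : ℝ} (hy : y ∈ J)
    (hs : s ∈ J') : G y s = codeOp G J' x₀ y (G x₀ s) := by
  rw [hperm.apply_eq_codeOp_swap hS2 hy hs, hperm.codeOp_comm hS2 (hcode.1 x₀ hS2.1 s hs) hy]

end Code

theorem permutable_iff_additive_representation_general
    (J J' : Set ℝ) (G : ℝ → ℝ → ℝ) (x₀ : ℝ)
    (hJ : NondegNonnegInterval J)
    (hcode : IsCode J J' J G)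
    (hS1 : SolvS1 J J' J G) (hS2 : X0Solvable J J' J G x₀) :
    Permutable J J' G ↔
      ∃ f g : ℝ → ℝ,
        ContinuousOn f J ∧ StrictMonoOn f J ∧
        ContinuousOn g J' ∧ (StrictMonoOn g J' ∨ StrictAntiOn g J') ∧
        (∀ y ∈ J, ∀ r ∈ J', f y + g r ∈ f '' J) ∧
        ∀ y ∈ J, ∀ r ∈ J', f (G y r) = f y + g r := by
  have hGJ := hcode.1
  have hGx₀ : MapsTo (G x₀) J' J := hGJ x₀ hS2.1
  constructor
  · intro hperm
    obtain ⟨f, hfc, hfm, hadd⟩ := (hperm.isSolvableMonoidOp hS2 hJ.1 hcode hS1)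
      |>.exists_continuousOn_strictMonoOn_additive hJ.2.1
    have hrep : ∀ y ∈ J, ∀ r ∈ J', f (G y r) = f y + f (G x₀ r) := fun y hy r hr => by
      rw [hperm.apply_eq_codeOp hS2 hcode hy hr, hadd y hy _ (hGx₀ hr)]
    refine ⟨f, f ∘ G x₀, hfc, hfm, hfc.comp (hcode.2.2.2.2.2 x₀ hS2.1) hGx₀, ?_,
      fun y hy r hr => hrep y hy r hr ▸ mem_image_of_mem f (hGJ y hy r hr), hrep⟩
    rcases hcode.2.2.2.1 with hmono | hanti
    · exact .inl (hfm.comp (hmono x₀ hS2.1) hGx₀)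
    · exact .inr (hfm.comp_strictAntiOn (hanti x₀ hS2.1) hGx₀)
  · rintro ⟨f, g, -, hfm, -, -, -, hrep⟩ x hx s hs t ht
    refine hfm.injOn (hGJ _ (hGJ x hx s hs) t ht) (hGJ _ (hGJ x hx t ht) s hs) ?_
    rw [hrep _ (hGJ x hx s hs) t ht, hrep _ (hGJ x hx t ht) s hs, hrep x hx s hs, hrep x hx t ht]
    ring

/-- Theorem (ii): a solvable code `G : J × J' → J` is permutable iff
`G(y,r) = f⁻¹(f(y) + g(r))` for some continuous `f` strictly increasing on `J`
and continuous `g` strictly monotonic on `J'` (equivalently, since `G(y,r) ∈ J`,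
`f(G(y,r)) = f(y) + g(r)`, so `f(y) + g(r)` lies in the range of `f`). -/
theorem permutable_iff_additive_representation
    (J J' : Set ℝ) (G : ℝ → ℝ → ℝ) (x₀ : ℝ)
    (hJ : NondegNonnegInterval J) (hJ' : NondegNonnegInterval J')
    (hcode : IsCode J J' J G)
    (hS1 : SolvS1 J J' J G) (hS2 : X0Solvable J J' J G x₀) :
    Permutable J J' G ↔
      ∃ f g : ℝ → ℝ,
        ContinuousOn f J ∧ StrictMonoOn f J ∧
        ContinuousOn g J' ∧ (StrictMonoOn g J' ∨ StrictAntiOn g J') ∧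
        (∀ y ∈ J, ∀ r ∈ J', f y + g r ∈ f '' J) ∧
        ∀ y ∈ J, ∀ r ∈ J', f (G y r) = f y + g r :=
  permutable_iff_additive_representation_general J J' G x₀ hJ hcode hS1 hS2
end

section
/- Suppose a solvable code G : J × J' → J has the representation G(y,r) = f⁻¹(f(y) + g(r)) with f : J → ℝ continuous and strictly increasing and g : J' → ℝ continuous and strictly monotonic. If G is differentiable in both variables with non-vanishing partial derivatives, then the functions f and g are differentiable. -/
/-!
By Lebesgue's theorem the monotone function `f` is differentiable almost everywhere, hence at some
point of every nondegenerate interval. The representation moves such a point along either variable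
of `G`: `f y = f (G y r) - g r` and `g s = f (G w s) - f w`. As `G p ·` and `G · r` are continuous
and injective on intervals, their images contain nondegenerate intervals, so `r` (resp. `w`) can be
chosen with `f` differentiable at `G p r` (resp. `G w r`); the chain rule then differentiates `f`
at `p` and `g` at `r`.
-/

open Set MeasureTheory

theorem MonotoneOn.exists_differentiableAt_of_lt {f : ℝ → ℝ} {a b : ℝ}
    (hf : MonotoneOn f (Ioo a b)) (hab : a < b) : ∃ c ∈ Ioo a b, DifferentiableAt ℝ f c := by
  obtain ⟨c, hc, hdiff⟩ := Measure.exists_mem_of_measure_ne_zero_of_ae (by simpa using hab)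
    (hf.ae_differentiableWithinAt measurableSet_Ioo)
  exact ⟨c, hc, hdiff.differentiableAt (Ioo_mem_nhds hc.1 hc.2)⟩

theorem MonotoneOn.exists_differentiableAt_comp {f ψ : ℝ → ℝ} {s t : Set ℝ}
    (hf : MonotoneOn f s) (ht : t.OrdConnected) (hψ : ContinuousOn ψ t) (hmaps : MapsTo ψ t s)
    {a b : ℝ} (ha : a ∈ t) (hb : b ∈ t) (hab : ψ a ≠ ψ b) :
    ∃ x ∈ t, DifferentiableAt ℝ f (ψ x) := by
  have hsub : Ioo (ψ a ⊓ ψ b) (ψ a ⊔ ψ b) ⊆ ψ '' t :=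
    Ioo_subset_Icc_self.trans <| (intermediate_value_uIcc (hψ.mono (ht.uIcc_subset ha hb))).trans
      (image_mono (ht.uIcc_subset ha hb))
  obtain ⟨c, hc, hdiff⟩ :=
    (hf.mono (hsub.trans (image_subset_iff.2 hmaps))).exists_differentiableAt_of_lt
      (inf_lt_sup.2 hab)
  obtain ⟨x, hx, rfl⟩ := hsub hc
  exact ⟨x, hx, hdiff⟩

theorem DifferentiableAt.differentiableWithinAt_of_eqOn_comp_sub {φ f γ : ℝ → ℝ} {s : Set ℝ}
    {x c : ℝ} (hf : DifferentiableAt ℝ f (γ x)) (hγ : DifferentiableWithinAt ℝ γ s x)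
    (hx : x ∈ s) (heq : EqOn φ (fun y => f (γ y) - c) s) : DifferentiableWithinAt ℝ φ s x :=
  ((hf.comp_differentiableWithinAt x hγ).sub_const c).congr heq (heq hx)

theorem representation_differentiable_general
    (J J' : Set ℝ) (G : ℝ → ℝ → ℝ) (f g : ℝ → ℝ)
    (hJ : NondegNonnegInterval J) (hJ' : NondegNonnegInterval J')
    (hcode : IsCode J J' J G)
    (hfm : StrictMonoOn f J)
    (hrep : ∀ y ∈ J, ∀ r ∈ J', f (G y r) = f y + g r)
    (hd1 : ∀ x ∈ J, ∀ s ∈ J', ∃ d : ℝ, d ≠ 0 ∧ HasDerivWithinAt (fun u => G u s) d J x)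
    (hd2 : ∀ x ∈ J, ∀ s ∈ J', ∃ d : ℝ, d ≠ 0 ∧ HasDerivWithinAt (fun u => G x u) d J' s) :
    (∀ x ∈ J, DifferentiableWithinAt ℝ f J x) ∧
    (∀ s ∈ J', DifferentiableWithinAt ℝ g J' s) := by
  obtain ⟨hmaps, -, hmono₁, hmono₂, hcont₁, hcont₂⟩ := hcode
  obtain ⟨a, ha, b, hb, hab⟩ := hJ.2.1
  obtain ⟨a', ha', b', hb', hab'⟩ := hJ'.2.1
  constructor
  · intro p hp
    have hinj : InjOn (G p) J' :=
      hmono₂.elim (fun h => (h p hp).injOn) (fun h => (h p hp).injOn)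
    obtain ⟨r, hr, hfr⟩ := hfm.monotoneOn.exists_differentiableAt_comp hJ'.1 (hcont₂ p hp)
      (fun r hr => hmaps p hp r hr) ha' hb' (hinj.ne ha' hb' hab')
    obtain ⟨_, -, hG⟩ := hd1 p hp r hr
    exact hfr.differentiableWithinAt_of_eqOn_comp_sub (γ := fun y => G y r)
      hG.differentiableWithinAt hp
      fun y hy => eq_sub_of_add_eq (hrep y hy r hr).symm
  · intro r hr
    obtain ⟨w, hw, hfw⟩ := hfm.monotoneOn.exists_differentiableAt_comp hJ.1 (hcont₁ r hr)
      (fun w hw => hmaps w hw r hr) ha hb ((hmono₁ r hr).injOn.ne ha hb hab)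
    obtain ⟨_, -, hG⟩ := hd2 w hw r hr
    exact hfw.differentiableWithinAt_of_eqOn_comp_sub hG.differentiableWithinAt hr
      fun s hs => eq_sub_of_add_eq' (hrep w hw s hs).symm

/-- Theorem (iv): if a solvable code `G(y,r) = f⁻¹(f(y) + g(r))` is differentiable in
both variables with non-vanishing derivatives, then `f` and `g` are differentiable. -/
theorem representation_differentiable
    (J J' : Set ℝ) (G : ℝ → ℝ → ℝ) (x₀ : ℝ) (f g : ℝ → ℝ)
    (hJ : NondegNonnegInterval J) (hJ' : NondegNonnegInterval J')
    (hcode : IsCode J J' J G)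
    (hS1 : SolvS1 J J' J G) (hS2 : X0Solvable J J' J G x₀)
    (hf : ContinuousOn f J) (hfm : StrictMonoOn f J)
    (hg : ContinuousOn g J') (hgm : StrictMonoOn g J' ∨ StrictAntiOn g J')
    (hrep : ∀ y ∈ J, ∀ r ∈ J', f (G y r) = f y + g r)
    (hd1 : ∀ x ∈ J, ∀ s ∈ J', ∃ d : ℝ, d ≠ 0 ∧ HasDerivWithinAt (fun u => G u s) d J x)
    (hd2 : ∀ x ∈ J, ∀ s ∈ J', ∃ d : ℝ, d ≠ 0 ∧ HasDerivWithinAt (fun u => G x u) d J' s) :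
    (∀ x ∈ J, DifferentiableWithinAt ℝ f J x) ∧
    (∀ s ∈ J', DifferentiableWithinAt ℝ g J' s) :=
  representation_differentiable_general J J' G f g hJ hJ' hcode hfm hrep hd1 hd2
end

section
/- Suppose the representation G(y,r) = f⁻¹(f(y) + g(r)) holds for a code G : J × J' → J, where f : J → ℝ is continuous and strictly increasing and g : J' → ℝ is continuous and strictly monotonic. Then G(y,r) = (f*)⁻¹(f*(y) + g*(r)) also holds for continuous functions f* and g*, respectively comonotonic with f and g, if and only if f* = ξf + θ and g* = ξg for some constants ξ > 0 and θ ∈ ℝ. -/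
theorem Set.OrdConnected.inter_inter_nonempty {α : Type*} [LinearOrder α] {s t u : Set α}
    (hs : s.OrdConnected) (ht : t.OrdConnected) (hu : u.OrdConnected)
    (hst : (s ∩ t).Nonempty) (htu : (t ∩ u).Nonempty) (hsu : (s ∩ u).Nonempty) :
    (s ∩ t ∩ u).Nonempty := by
  obtain ⟨a, has, hat⟩ := hst
  obtain ⟨b, hbt, hbu⟩ := htu
  obtain ⟨c, hcs, hcu⟩ := hsu
  refine ⟨max (min a b) (min (max a b) c), ⟨hs.uIcc_subset has hcs ?_, ht.uIcc_subset hat hbt ?_⟩,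
    hu.uIcc_subset hbu hcu ?_⟩ <;>
  rcases le_total a b with h₁ | h₁ <;> rcases le_total b c with h₂ | h₂ <;>
    rcases le_total a c with h₃ | h₃ <;> simp [*] <;> constructor <;> order

theorem IsPreconnected.apply_eq_of_forall_dist_lt {X Y : Type*} [PseudoMetricSpace X]
    {s : Set X} (hs : IsPreconnected s) {φ : X → Y} {ε : ℝ} (hε : 0 < ε)
    (h : ∀ x ∈ s, ∀ y ∈ s, dist x y < ε → φ x = φ y) {x y : X} (hx : x ∈ s) (hy : y ∈ s) :
    φ x = φ y := by
  refine hs.induction₂ (fun x y => φ x = φ y) (fun x hx => ?_) (fun _ _ _ _ _ _ => Eq.trans)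
    (fun _ _ _ _ => Eq.symm) hx hy
  filter_upwards [self_mem_nhdsWithin, mem_nhdsWithin_of_mem_nhds (Metric.ball_mem_nhds x hε)]
    with y hy hxy
  exact h x hx y hy (by simpa [dist_comm] using hxy)

theorem exists_strictMonoOn_comp_of_le_iff_le {α β γ : Type*} [Nonempty α] [LinearOrder β]
    [LinearOrder γ] {s : Set α} {f : α → β} {F : α → γ}
    (h : ∀ x ∈ s, ∀ y ∈ s, f x ≤ f y ↔ F x ≤ F y) :
    ∃ φ : β → γ, StrictMonoOn φ (f '' s) ∧ ∀ x ∈ s, F x = φ (f x) := by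
  have hF : ∀ x ∈ s, F x = F (Function.invFunOn f s (f x)) := fun x hx =>
    have hx' := Function.invFunOn_mem ⟨x, hx, rfl⟩
    have hfx := Function.invFunOn_eq (f := f) ⟨x, hx, rfl⟩
    le_antisymm ((h x hx _ hx').1 hfx.ge) ((h _ hx' x hx).1 hfx.le)
  refine ⟨fun b => F (Function.invFunOn f s b), ?_, hF⟩
  rintro _ ⟨x, hx, rfl⟩ _ ⟨y, hy, rfl⟩ hxy
  simp only [← hF x hx, ← hF y hy]
  exact lt_of_not_ge fun hyx => hxy.not_ge ((h y hy x hx).2 hyx)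

theorem eq_add_mul_sub_of_add_eq_two_mul {u : ℕ → ℝ} {N : ℕ}
    (h : ∀ k, k + 2 ≤ N → u k + u (k + 2) = 2 * u (k + 1)) :
    ∀ k ≤ N, u k = u 0 + k * (u 1 - u 0) := by
  intro k hk
  induction k using Nat.strong_induction_on with
  | _ k ih =>
    match k with
    | 0 => simp
    | 1 => simp
    | k + 2 =>
      have := h k hk
      rw [ih k (by omega) (by omega), ih (k + 1) (by omega) (by omega)] at this
      push_cast at this ⊢
      linarith

def JensenOn (β : ℝ → ℝ) (B : Set ℝ) : Prop :=
  ∀ x ∈ B, ∀ y ∈ B, β x + β y = 2 * β ((x + y) / 2)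

namespace JensenOn

variable {β : ℝ → ℝ}

theorem mono {B C : Set ℝ} (hβ : JensenOn β B) (hCB : C ⊆ B) : JensenOn β C :=
  fun x hx y hy => hβ x (hCB hx) y (hCB hy)

theorem eq_slope_of_Icc {u v : ℝ} (hβ : JensenOn β (Set.Icc u v))
    (hmono : MonotoneOn β (Set.Icc u v)) (huv : u < v) :
    ∀ x ∈ Set.Icc u v, β x = slope β u v * (x - u) + β u := by
  set s := slope β u v with hs_def
  have hvu : 0 < v - u := sub_pos.2 huv
  have hs : s * (v - u) = β v - β u := by
    rw [hs_def, slope_def_field, div_mul_cancel₀ _ hvu.ne']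
  have hs₀ : 0 ≤ s := by
    rw [hs_def, slope_def_field]
    exact div_nonneg (sub_nonneg.2 (hmono ⟨le_rfl, huv.le⟩ ⟨huv.le, le_rfl⟩ huv.le)) hvu.le
  have hgrid : ∀ N : ℕ, 0 < N → ∀ k ≤ N,
      u + k * ((v - u) / N) ∈ Set.Icc u v ∧
        β (u + k * ((v - u) / N)) = s * (k * ((v - u) / N)) + β u := by
    intro N hN
    set d := (v - u) / N
    have hNd : N * d = v - u := mul_div_cancel₀ _ (by positivity)
    have hmem : ∀ k ≤ N, u + k * d ∈ Set.Icc u v := fun k hk => by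
      have : (k : ℝ) * d ≤ N * d :=
        mul_le_mul_of_nonneg_right (by exact_mod_cast hk) (by positivity)
      constructor <;> nlinarith [show 0 ≤ (k : ℝ) * d by positivity]
    have hprog := eq_add_mul_sub_of_add_eq_two_mul (u := fun k : ℕ => β (u + k * d)) (N := N)
      fun k hk => by
        have := hβ _ (hmem k (by omega)) _ (hmem (k + 2) hk)
        convert this using 3
        push_cast
        ring
    simp only [Nat.cast_zero, zero_mul, add_zero, Nat.cast_one, one_mul] at hprog
    have hstep : β (u + d) - β u = s * d := by
      have := hprog N le_rfl
      rw [hNd, add_sub_cancel] at this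
      rw [← hNd] at hs
      have : (N : ℝ) * (β (u + d) - β u) = N * (s * d) := by linarith
      exact mul_left_cancel₀ (by positivity) this
    intro k hk
    refine ⟨hmem k hk, ?_⟩
    rw [hprog k hk, hstep]
    ring
  intro x hx
  have hbound : ∀ N : ℕ, 0 < N → |β x - (s * (x - u) + β u)| ≤ s * (v - u) / N := by
    intro N hN
    set d := (v - u) / N
    have hd : 0 < d := by positivity
    set t := (x - u) / d
    have ht : t * d = x - u := div_mul_cancel₀ _ hd.ne'
    have htN : t ≤ N := by
      rw [div_le_iff₀ hd]
      linarith [hx.2, (mul_div_cancel₀ (v - u) (by positivity : (N : ℝ) ≠ 0))]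
    have ht₀ : 0 ≤ t := div_nonneg (by linarith [hx.1]) hd.le
    obtain ⟨hmem₁, hβ₁⟩ := hgrid N hN ⌊t⌋₊ (Nat.floor_le_of_le htN)
    obtain ⟨hmem₂, hβ₂⟩ := hgrid N hN ⌈t⌉₊ (Nat.ceil_le.2 htN)
    have h₁ : (⌊t⌋₊ : ℝ) * d ≤ x - u := ht ▸ mul_le_mul_of_nonneg_right (Nat.floor_le ht₀) hd.le
    have h₂ : x - u ≤ (⌈t⌉₊ : ℝ) * d := ht ▸ mul_le_mul_of_nonneg_right (Nat.le_ceil t) hd.le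
    have h₃ : (⌈t⌉₊ : ℝ) * d ≤ (⌊t⌋₊ : ℝ) * d + d := by
      have : (⌈t⌉₊ : ℝ) ≤ ⌊t⌋₊ + 1 := by exact_mod_cast Nat.ceil_le_floor_add_one t
      nlinarith
    have hlo := hmono hmem₁ hx (by linarith)
    have hhi := hmono hx hmem₂ (by linarith)
    have : s * d = s * (v - u) / N := mul_div_assoc' _ _ _
    rw [abs_le]
    constructor <;> nlinarith [mul_le_mul_of_nonneg_left h₁ hs₀, mul_le_mul_of_nonneg_left h₂ hs₀,
      mul_le_mul_of_nonneg_left h₃ hs₀]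
  have : |β x - (s * (x - u) + β u)| ≤ 0 :=
    ge_of_tendsto (tendsto_const_div_atTop_nhds_zero_nat _)
      (Filter.eventually_atTop.2 ⟨1, fun N hN => hbound N hN⟩)
  linarith [abs_nonneg (β x - (s * (x - u) + β u)), abs_le.1 this]

theorem eq_slope {B : Set ℝ} (hβ : JensenOn β B) (hB : B.OrdConnected) (hmono : MonotoneOn β B)
    {b₀ b₁ : ℝ} (hb₀ : b₀ ∈ B) (hb₁ : b₁ ∈ B) (hlt : b₀ < b₁) :
    ∀ b ∈ B, β b = slope β b₀ b₁ * (b - b₀) + β b₀ := by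
  intro b hb
  have hsub : Set.Icc (min b₀ b) (max b₁ b) ⊆ B :=
    hB.out (min_rec' (· ∈ B) hb₀ hb) (max_rec' (· ∈ B) hb₁ hb)
  have hlt' : min b₀ b < max b₁ b := (min_le_left _ _).trans_lt (hlt.trans_le (le_max_left _ _))
  have hline := (hβ.mono hsub).eq_slope_of_Icc (hmono.mono hsub) hlt'
  have e₀ := hline b₀ ⟨min_le_left _ _, hlt.le.trans (le_max_left _ _)⟩
  have e₁ := hline b₁ ⟨(min_le_left _ _).trans hlt.le, le_max_left _ _⟩
  have e := hline b ⟨min_le_right _ _, le_max_right _ _⟩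
  have hs : slope β b₀ b₁ = slope β (min b₀ b) (max b₁ b) := by
    rw [slope_def_field, e₀, e₁, div_eq_iff (sub_ne_zero.2 hlt.ne')]
    ring
  rw [hs]
  linarith

end JensenOn

section Pexider

variable {A B : Set ℝ} {α β : ℝ → ℝ}

theorem jensenOn_of_map_add (hB : B.OrdConnected) (hA : A.Nonempty)
    (hadd : ∀ a ∈ A, ∀ b ∈ B, a + b ∈ A ∧ α (a + b) = α a + β b) : JensenOn β B := by
  obtain ⟨a, ha⟩ := hA
  intro x hx y hy
  have hm : (x + y) / 2 ∈ B := hB.uIcc_subset hx hy <| by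
    rcases le_total x y with h | h
    · exact Set.mem_uIcc.2 (Or.inl ⟨by linarith, by linarith⟩)
    · exact Set.mem_uIcc.2 (Or.inr ⟨by linarith, by linarith⟩)
  obtain ⟨hax, ex⟩ := hadd a ha x hx
  obtain ⟨-, exy⟩ := hadd _ hax y hy
  obtain ⟨ham, em⟩ := hadd a ha _ hm
  obtain ⟨-, emm⟩ := hadd _ ham _ hm
  rw [show a + x + y = a + (x + y) / 2 + (x + y) / 2 by ring] at exy
  linarith

theorem eq_of_map_add_eq_add_const (hA : A.OrdConnected) (hB : B.OrdConnected)
    (hBnt : B.Nontrivial) {γ : ℝ → ℝ} {η : ℝ} (hγ : ∀ a ∈ A, ∀ b ∈ B, γ (a + b) = γ a + η)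
    (hcover : ∀ w ∈ A, ∃ a ∈ A, ∃ b ∈ B, a + b = w) {w w' : ℝ} (hw : w ∈ A) (hw' : w' ∈ A) :
    γ w = γ w' := by
  obtain ⟨b₀, hb₀, b₁, hb₁, hlt⟩ := hBnt.exists_lt
  have hdiff : ∀ c : ℝ, ({u | c - u ∈ B} : Set ℝ).OrdConnected := fun c =>
    hB.preimage_anti fun _ _ h => sub_le_sub_left h c
  have hcover' : ∀ c ∈ A, (A ∩ {u | c - u ∈ B}).Nonempty := fun c hc => by
    obtain ⟨a, ha, b, hb, rfl⟩ := hcover c hc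
    exact ⟨a, ha, by simpa using hb⟩
  -- One-dimensional Helly: points of `A` closer than the length of `B` are `a + b`, `a + b'`.
  have hnear : ∀ w ∈ A, ∀ w' ∈ A, w ≤ w' → w' < w + (b₁ - b₀) → γ w = γ w' := by
    intro w hw w' hw' h₁ h₂
    have hpair : ({u | w - u ∈ B} ∩ {u | w' - u ∈ B}).Nonempty :=
      ⟨w' - b₁, hB.out hb₀ hb₁ ⟨by linarith, by linarith⟩, by simpa using hb₁⟩
    obtain ⟨a, ⟨ha, hwa⟩, hw'a⟩ :=
      hA.inter_inter_nonempty (hdiff w) (hdiff w') (hcover' w hw) hpair (hcover' w' hw')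
    have e := hγ a ha _ hwa
    have e' := hγ a ha _ hw'a
    rw [add_sub_cancel] at e e'
    rw [e, e']
  refine hA.isPreconnected.apply_eq_of_forall_dist_lt (sub_pos.2 hlt)
    (fun x hx y hy hxy => ?_) hw hw'
  rw [Real.dist_eq, abs_sub_lt_iff] at hxy
  rcases le_total x y with h | h
  · exact hnear x hx y hy h (by linarith)
  · exact (hnear y hy x hx h (by linarith)).symm

theorem exists_affine_of_map_add (hA : A.OrdConnected) (hB : B.OrdConnected) (hAne : A.Nonempty)
    (hBnt : B.Nontrivial) (hβ : StrictMonoOn β B)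
    (hadd : ∀ a ∈ A, ∀ b ∈ B, a + b ∈ A ∧ α (a + b) = α a + β b)
    (hcover : ∀ w ∈ A, ∃ a ∈ A, ∃ b ∈ B, a + b = w) :
    ∃ ξ θ : ℝ, 0 < ξ ∧ (∀ a ∈ A, α a = ξ * a + θ) ∧ ∀ b ∈ B, β b = ξ * b := by
  obtain ⟨a₀, ha₀⟩ := hAne
  obtain ⟨b₀, hb₀, b₁, hb₁, hlt⟩ := hBnt.exists_lt
  set ξ := slope β b₀ b₁ with hξ_def
  have hξ : 0 < ξ := by
    rw [hξ_def, slope_def_field]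
    exact div_pos (sub_pos.2 (hβ hb₀ hb₁ hlt)) (sub_pos.2 hlt)
  have hβ_aff := (jensenOn_of_map_add hB ⟨a₀, ha₀⟩ hadd).eq_slope hB hβ.monotoneOn hb₀ hb₁ hlt
  set η := β b₀ - ξ * b₀
  have hγ : ∀ a ∈ A, ∀ b ∈ B, α (a + b) - ξ * (a + b) = α a - ξ * a + η := fun a ha b hb => by
    rw [(hadd a ha b hb).2, hβ_aff b hb]
    ring
  have hγ_const : ∀ a ∈ A, α a - ξ * a = α a₀ - ξ * a₀ := fun a ha =>
    eq_of_map_add_eq_add_const (γ := fun a => α a - ξ * a) hA hB hBnt hγ hcover ha ha₀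
  have hη : η = 0 := by
    have := hγ a₀ ha₀ b₀ hb₀
    rw [hγ_const _ (hadd a₀ ha₀ b₀ hb₀).1] at this
    linarith
  refine ⟨ξ, α a₀ - ξ * a₀, hξ, fun a ha => by linarith [hγ_const a ha], fun b hb => ?_⟩
  rw [hβ_aff b hb]
  linarith

end Pexider

theorem representation_uniqueness_general
    (J J' : Set ℝ) (G : ℝ → ℝ → ℝ) (f g fs gs : ℝ → ℝ)
    (hJ : NondegNonnegInterval J) (hJ' : NondegNonnegInterval J')
    (hcode : IsCode J J' J G)
    (hf : ContinuousOn f J)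
    (hg : ContinuousOn g J') (hgm : StrictMonoOn g J' ∨ StrictAntiOn g J')
    (hrep : ∀ y ∈ J, ∀ r ∈ J', f (G y r) = f y + g r)
    (hfscom : ∀ x ∈ J, ∀ y ∈ J, (f x ≤ f y ↔ fs x ≤ fs y))
    (hgscom : ∀ s ∈ J', ∀ t ∈ J', (g s ≤ g t ↔ gs s ≤ gs t)) :
    (∀ y ∈ J, ∀ r ∈ J', fs (G y r) = fs y + gs r) ↔
      ∃ ξ θ : ℝ, 0 < ξ ∧ (∀ x ∈ J, fs x = ξ * f x + θ) ∧
        (∀ r ∈ J', gs r = ξ * g r) := by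
  obtain ⟨hJo, hJnt, -⟩ := hJ
  obtain ⟨hJ'o, hJ'nt, -⟩ := hJ'
  obtain ⟨hGmem, hGsurj, -⟩ := hcode
  constructor
  · intro hreps
    obtain ⟨α, -, hα⟩ := exists_strictMonoOn_comp_of_le_iff_le hfscom
    obtain ⟨β, hβ, hβg⟩ := exists_strictMonoOn_comp_of_le_iff_le hgscom
    have hadd : ∀ a ∈ f '' J, ∀ b ∈ g '' J', a + b ∈ f '' J ∧ α (a + b) = α a + β b := by
      rintro _ ⟨y, hy, rfl⟩ _ ⟨r, hr, rfl⟩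
      rw [← hrep y hy r hr, ← hα _ (hGmem y hy r hr), ← hα y hy, ← hβg r hr]
      exact ⟨⟨_, hGmem y hy r hr, rfl⟩, hreps y hy r hr⟩
    have hcover : ∀ w ∈ f '' J, ∃ a ∈ f '' J, ∃ b ∈ g '' J', a + b = w := by
      rintro _ ⟨p, hp, rfl⟩
      obtain ⟨x, hx, s, hs, rfl⟩ := hGsurj p hp
      exact ⟨f x, ⟨x, hx, rfl⟩, g s, ⟨s, hs, rfl⟩, (hrep x hx s hs).symm⟩
    obtain ⟨ξ, θ, hξ, hαξ, hβξ⟩ := exists_affine_of_map_add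
      (hJo.isPreconnected.image f hf).ordConnected (hJ'o.isPreconnected.image g hg).ordConnected
      (Set.Nontrivial.nonempty hJnt |>.image f)
      (Set.Nontrivial.image_of_injOn hJ'nt (hgm.elim StrictMonoOn.injOn StrictAntiOn.injOn))
      hβ hadd hcover
    exact ⟨ξ, θ, hξ, fun x hx => by rw [hα x hx, hαξ _ ⟨x, hx, rfl⟩],
      fun r hr => by rw [hβg r hr, hβξ _ ⟨r, hr, rfl⟩]⟩
  · rintro ⟨ξ, θ, -, hfs, hgs⟩ y hy r hr
    rw [hfs _ (hGmem y hy r hr), hrep y hy r hr, hfs y hy, hgs r hr]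
    ring

/-- Uniqueness of the additive representation: if `G(y,r) = f⁻¹(f(y) + g(r))` for a
code `G`, then continuous `f*, g*` comonotonic with `f, g` also give
`G(y,r) = (f*)⁻¹(f*(y) + g*(r))` iff `f* = ξ f + θ` and `g* = ξ g` with `ξ > 0`. -/
theorem representation_uniqueness
    (J J' : Set ℝ) (G : ℝ → ℝ → ℝ) (f g fs gs : ℝ → ℝ)
    (hJ : NondegNonnegInterval J) (hJ' : NondegNonnegInterval J')
    (hcode : IsCode J J' J G)
    (hf : ContinuousOn f J) (hfm : StrictMonoOn f J)
    (hg : ContinuousOn g J') (hgm : StrictMonoOn g J' ∨ StrictAntiOn g J')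
    (hrep : ∀ y ∈ J, ∀ r ∈ J', f (G y r) = f y + g r)
    (hfs : ContinuousOn fs J) (hgs : ContinuousOn gs J')
    (hfscom : ∀ x ∈ J, ∀ y ∈ J, (f x ≤ f y ↔ fs x ≤ fs y))
    (hgscom : ∀ s ∈ J', ∀ t ∈ J', (g s ≤ g t ↔ gs s ≤ gs t)) :
    (∀ y ∈ J, ∀ r ∈ J', fs (G y r) = fs y + gs r) ↔
      ∃ ξ θ : ℝ, 0 < ξ ∧ (∀ x ∈ J, fs x = ξ * f x + θ) ∧
        (∀ r ∈ J', gs r = ξ * g r) :=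
  representation_uniqueness_general J J' G f g fs gs hJ hJ' hcode hf hg hgm hrep hfscom hgscom
end

section
/- Fix c > 0. Suppose f : (0,∞) → ℝ is continuous and strictly monotonic and g : [0,c) → ℝ is such that f(ℓ√(1 - (v/c)²)) = f(ℓ) + g(v) for all ℓ > 0 and v ∈ [0,c). Then there exist constants ξ > 0 (or ξ ≠ 0, with ξ > 0 when f is strictly increasing) and θ ∈ ℝ such that f(ℓ) = ξ·ln(ℓ) + θ for all ℓ > 0 and g(v) = ξ·ln(√(1-(v/c)²)) for all v ∈ [0,c). -/
/-! With `y = √(1 - (v/c)²)`, which ranges over all of `(0,1]`, the hypothesis says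
`f (ℓ y) = f ℓ + f y - f 1` for `ℓ > 0` and `y ∈ (0,1]`; inverting `y` extends this to all
`y > 0`. Then `t ↦ f (exp t) - f 1` is a continuous additive function on `ℝ`, hence linear,
so `f = ξ log + f 1`, and `g v = f y - f 1 = ξ log y`. -/

open Real Set

theorem exists_speed_sqrt_one_sub_div_sq_eq {c : ℝ} (hc : 0 < c) {y : ℝ} (hy : 0 < y)
    (hy1 : y ≤ 1) : ∃ v, 0 ≤ v ∧ v < c ∧ √(1 - (v / c) ^ 2) = y := by
  have h1y : 0 ≤ 1 - y ^ 2 := by nlinarith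
  refine ⟨c * √(1 - y ^ 2), by positivity, ?_, ?_⟩
  · exact mul_lt_of_lt_one_right hc ((sqrt_lt' one_pos).mpr (by nlinarith))
  · rw [mul_div_cancel_left₀ _ hc.ne', sq_sqrt h1y, sub_sub_cancel, sqrt_sq hy.le]

theorem map_mul_of_map_mul_of_le_one {f : ℝ → ℝ}
    (h : ∀ ℓ > 0, ∀ y, 0 < y → y ≤ 1 → f (ℓ * y) = f ℓ + f y - f 1) {a b : ℝ} (ha : 0 < a)
    (hb : 0 < b) : f (a * b) = f a + f b - f 1 := by
  rcases le_or_gt b 1 with hb1 | hb1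
  · exact h a ha b hb hb1
  · have hinv : 0 < b⁻¹ := inv_pos.mpr hb
    have hinv1 : b⁻¹ ≤ 1 := inv_le_one_of_one_le₀ hb1.le
    have hab := h (a * b) (mul_pos ha hb) b⁻¹ hinv hinv1
    have hbb := h b hb b⁻¹ hinv hinv1
    rw [mul_assoc, mul_inv_cancel₀ hb.ne', mul_one] at hab
    rw [mul_inv_cancel₀ hb.ne'] at hbb
    linarith

theorem eq_mul_map_one_of_continuous_of_map_add {φ : ℝ → ℝ} (hφ : Continuous φ)
    (hadd : ∀ s t, φ (s + t) = φ s + φ t) (t : ℝ) : φ t = t * φ 1 := by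
  simpa using map_real_smul (AddMonoidHom.mk' φ hadd) hφ t 1

theorem eq_mul_log_add_of_map_mul {f : ℝ → ℝ} (hf : ContinuousOn f (Ioi 0))
    (hmul : ∀ a > 0, ∀ b > 0, f (a * b) = f a + f b - f 1) {ℓ : ℝ} (hℓ : 0 < ℓ) :
    f ℓ = (f (exp 1) - f 1) * log ℓ + f 1 := by
  have hφ : Continuous fun t => f (exp t) - f 1 :=
    (hf.comp_continuous continuous_exp fun t => exp_pos t).sub continuous_const
  have hadd : ∀ s t, f (exp (s + t)) - f 1 = (f (exp s) - f 1) + (f (exp t) - f 1) := by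
    intro s t
    rw [exp_add, hmul _ (exp_pos s) _ (exp_pos t)]
    ring
  have := eq_mul_map_one_of_continuous_of_map_add hφ hadd (log ℓ)
  rw [exp_log hℓ] at this
  linarith

/-- The additive representation of the Lorentz-FitzGerald Contraction: if `f` is
continuous and strictly monotonic on `(0,∞)` and `f(ℓ√(1-(v/c)²)) = f(ℓ) + g(v)`
for all `ℓ > 0` and `v ∈ [0,c)`, then `f(ℓ) = ξ ln ℓ + θ` and
`g(v) = ξ ln √(1-(v/c)²)` for some constants `ξ ≠ 0` (with `ξ > 0` when `f` is
strictly increasing) and `θ`. -/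
theorem lorentz_fitzgerald_representation (c : ℝ) (hc : 0 < c) (f g : ℝ → ℝ)
    (hfc : ContinuousOn f (Set.Ioi (0 : ℝ)))
    (hfm : StrictMonoOn f (Set.Ioi (0 : ℝ)) ∨ StrictAntiOn f (Set.Ioi (0 : ℝ)))
    (heq : ∀ ℓ > (0 : ℝ), ∀ v, 0 ≤ v → v < c →
      f (ℓ * Real.sqrt (1 - (v / c) ^ 2)) = f ℓ + g v) :
    ∃ ξ θ : ℝ, ξ ≠ 0 ∧ (StrictMonoOn f (Set.Ioi (0 : ℝ)) → 0 < ξ) ∧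
      (∀ ℓ > (0 : ℝ), f ℓ = ξ * Real.log ℓ + θ) ∧
      (∀ v, 0 ≤ v → v < c → g v = ξ * Real.log (Real.sqrt (1 - (v / c) ^ 2))) := by
  have hg : ∀ v, 0 ≤ v → v < c → g v = f √(1 - (v / c) ^ 2) - f 1 := by
    intro v hv hvc
    linarith [one_mul √(1 - (v / c) ^ 2) ▸ heq 1 one_pos v hv hvc]
  have hpexider : ∀ ℓ > 0, ∀ y, 0 < y → y ≤ 1 → f (ℓ * y) = f ℓ + f y - f 1 := by
    intro ℓ hℓ y hy hy1
    obtain ⟨v, hv, hvc, rfl⟩ := exists_speed_sqrt_one_sub_div_sq_eq hc hy hy1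
    rw [heq ℓ hℓ v hv hvc, hg v hv hvc]
    ring
  have hf := fun ℓ (hℓ : 0 < ℓ) => eq_mul_log_add_of_map_mul hfc
    (fun a ha b hb => map_mul_of_map_mul_of_le_one hpexider ha hb) hℓ
  have h1e : (1 : ℝ) < exp 1 := one_lt_exp_iff.mpr one_pos
  refine ⟨f (exp 1) - f 1, f 1, ?_, fun hm => ?_, hf, fun v hv hvc => ?_⟩
  · rcases hfm with hm | hm <;> linarith [hm (mem_Ioi.mpr one_pos) (mem_Ioi.mpr (exp_pos 1)) h1e]
  · linarith [hm (mem_Ioi.mpr one_pos) (mem_Ioi.mpr (exp_pos 1)) h1e]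
  · have hvc' : (v / c) ^ 2 < 1 := by
      rw [sq_lt_one_iff_abs_lt_one, abs_of_nonneg (by positivity), div_lt_one hc]
      exact hvc
    rw [hg v hv hvc, hf _ (sqrt_pos.mpr (by linarith))]
    ring
end

section
/- Let f : (0,∞) → ℝ be strictly increasing and satisfy the functional equation f(√(x² + y²)) = f(x) + f(y) for all x,y > 0. Then there exists a constant ξ > 0 such that f(x) = ξx² for all x > 0. Moreover, with this f, the Pythagorean function P(x,y) = √(x² + y²) satisfies P(x,y) = f⁻¹(f(x) + f(y)), and P is permutable: P(P(x,y),z) = √(x²+y²+z²) = P(P(x,z),y) for all x,y,z > 0. -/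
/-!
Substituting `h z = f (√z)` turns the equation into Cauchy's equation `h (z + w) = h z + h w` on
`(0, ∞)`. Additivity forces `h q = h 1 * q` on positive rationals, and strict monotonicity pins `h`
between its values at rationals, so `h z = ξ z` with `ξ = h 1 > 0`, i.e. `f x = ξ x²`.
-/

open Set

section Cauchy

variable {h : ℝ → ℝ}

theorem map_natCast_mul_of_add (hadd : ∀ z > (0 : ℝ), ∀ w > (0 : ℝ), h (z + w) = h z + h w)
    {n : ℕ} (hn : 0 < n) {z : ℝ} (hz : 0 < z) : h (n * z) = n * h z := by
  induction n, hn using Nat.le_induction with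
  | base => simp
  | succ n hn ih =>
    have hnz : (0 : ℝ) < n * z := by positivity
    rw [Nat.cast_succ, add_mul, one_mul, hadd _ hnz _ hz, ih]
    ring

theorem map_ratCast_of_add (hadd : ∀ z > (0 : ℝ), ∀ w > (0 : ℝ), h (z + w) = h z + h w)
    {q : ℚ} (hq : 0 < q) : h q = h 1 * q := by
  obtain ⟨m, hm⟩ := Int.eq_ofNat_of_zero_le (Rat.num_pos.mpr hq).le
  have hm0 : 0 < m := by have := Rat.num_pos.mpr hq; omega
  have hq' : (0 : ℝ) < q := by exact_mod_cast hq
  have hden : (q.den : ℝ) * q = m := by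
    rw [mul_comm]; exact_mod_cast hm ▸ Rat.mul_den_eq_num q
  have key : (q.den : ℝ) * h q = m * h 1 := by
    rw [← map_natCast_mul_of_add hadd q.pos hq', hden, ← mul_one (m : ℝ),
      map_natCast_mul_of_add hadd hm0 one_pos, mul_one]
  have hden0 : (q.den : ℝ) ≠ 0 := by positivity
  apply mul_left_cancel₀ hden0
  linear_combination key - h 1 * hden

theorem StrictMonoOn.eq_mul_of_ratCast (hmono : StrictMonoOn h (Ioi 0)) {c : ℝ} (hc : 0 < c)
    (hrat : ∀ q : ℚ, 0 < q → h q = c * q) {z : ℝ} (hz : 0 < z) : h z = c * z := by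
  rcases lt_trichotomy (h z) (c * z) with hlt | heq | hgt
  · obtain ⟨q, hq₁, hq₂⟩ := exists_rat_btwn (max_lt ((div_lt_iff₀' hc).mpr hlt) hz)
    have hq : (0 : ℝ) < q := (le_max_right _ _).trans_lt hq₁
    have hcq : h z < c * q := (div_lt_iff₀' hc).mp ((le_max_left _ _).trans_lt hq₁)
    have := hmono hq hz hq₂
    rw [hrat q (by exact_mod_cast hq)] at this
    linarith
  · exact heq
  · obtain ⟨q, hq₁, hq₂⟩ := exists_rat_btwn ((lt_div_iff₀' hc).mpr hgt)
    have hq : (0 : ℝ) < q := hz.trans hq₁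
    have := hmono hz hq hq₁
    rw [hrat q (by exact_mod_cast hq)] at this
    linarith [(lt_div_iff₀' hc).mp hq₂]

theorem StrictMonoOn.exists_pos_eq_mul_of_add (hmono : StrictMonoOn h (Ioi 0))
    (hadd : ∀ z > (0 : ℝ), ∀ w > (0 : ℝ), h (z + w) = h z + h w) :
    ∃ c > (0 : ℝ), ∀ z > (0 : ℝ), h z = c * z := by
  have hc : 0 < h 1 := by
    have h2 : h 2 = h 1 + h 1 := by rw [← hadd 1 one_pos 1 one_pos]; norm_num
    linarith [hmono (mem_Ioi.mpr one_pos) (mem_Ioi.mpr two_pos) one_lt_two]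
  exact ⟨h 1, hc, fun z hz => hmono.eq_mul_of_ratCast hc (fun q hq => map_ratCast_of_add hadd hq) hz⟩

end Cauchy

theorem exists_pos_eq_mul_sq_of_sqrt_add_sq {f : ℝ → ℝ} (hf : StrictMonoOn f (Ioi 0))
    (heq : ∀ x > (0 : ℝ), ∀ y > (0 : ℝ), f (Real.sqrt (x ^ 2 + y ^ 2)) = f x + f y) :
    ∃ ξ > (0 : ℝ), ∀ x > (0 : ℝ), f x = ξ * x ^ 2 := by
  have hmono : StrictMonoOn (fun z => f (Real.sqrt z)) (Ioi 0) := fun a ha b hb hab =>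
    hf (Real.sqrt_pos.mpr ha) (Real.sqrt_pos.mpr hb) (Real.sqrt_lt_sqrt (le_of_lt ha) hab)
  have hadd : ∀ z > (0 : ℝ), ∀ w > (0 : ℝ),
      f (Real.sqrt (z + w)) = f (Real.sqrt z) + f (Real.sqrt w) := fun z hz w hw => by
    simpa only [Real.sq_sqrt hz.le, Real.sq_sqrt hw.le] using
      heq _ (Real.sqrt_pos.mpr hz) _ (Real.sqrt_pos.mpr hw)
  obtain ⟨ξ, hξ, hlin⟩ := hmono.exists_pos_eq_mul_of_add hadd
  refine ⟨ξ, hξ, fun x hx => ?_⟩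
  rw [← hlin (x ^ 2) (by positivity), Real.sqrt_sq hx.le]

/-- The Pythagorean function: a strictly increasing solution `f` of
`f(√(x² + y²)) = f(x) + f(y)` on `(0,∞)` has the form `f(x) = ξx²` with `ξ > 0`;
with this `f`, `P(x,y) = √(x² + y²)` satisfies `P(x,y) = f⁻¹(f(x) + f(y))` and
`P` is permutable: `P(P(x,y),z) = √(x² + y² + z²) = P(P(x,z),y)`. -/
theorem pythagorean_representation_and_permutable (f : ℝ → ℝ)
    (hf : StrictMonoOn f (Set.Ioi (0 : ℝ)))
    (heq : ∀ x > (0 : ℝ), ∀ y > (0 : ℝ), f (Real.sqrt (x ^ 2 + y ^ 2)) = f x + f y)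
    (P : ℝ → ℝ → ℝ) (hP : ∀ x > (0 : ℝ), ∀ y > (0 : ℝ), P x y = Real.sqrt (x ^ 2 + y ^ 2)) :
    (∃ ξ > (0 : ℝ), ∀ x > (0 : ℝ), f x = ξ * x ^ 2) ∧
    (∀ x > (0 : ℝ), ∀ y > (0 : ℝ), f (P x y) = f x + f y) ∧
    (∀ x > (0 : ℝ), ∀ y > (0 : ℝ), ∀ z > (0 : ℝ),
      P (P x y) z = Real.sqrt (x ^ 2 + y ^ 2 + z ^ 2) ∧ P (P x y) z = P (P x z) y) := by
  have hPP : ∀ x > (0 : ℝ), ∀ y > (0 : ℝ), ∀ z > (0 : ℝ),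
      P (P x y) z = Real.sqrt (x ^ 2 + y ^ 2 + z ^ 2) := fun x hx y hy z hz => by
    rw [hP x hx y hy, hP _ (by positivity) z hz, Real.sq_sqrt (by positivity)]
  refine ⟨exists_pos_eq_mul_sq_of_sqrt_add_sq hf heq,
    fun x hx y hy => hP x hx y hy ▸ heq x hx y hy,
    fun x hx y hy z hz => ⟨hPP x hx y hy z hz, ?_⟩⟩
  rw [hPP x hx y hy z hz, hPP x hx z hz y hy, add_right_comm]
end

section
/- Fix constants K > 0, a > 0, b > 0, and define the van der Waals function T(p,v) = K(p + a/v²)(v - b) for p > 0 and v > b. Then T is not permutable: there exist p, v, r (with all iterated expressions defined) such that T(T(p,v),r) ≠ T(T(p,r),v). -/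
/-!
Expanding the composition, the terms in `p` cancel and
`T(T(p,v),r) - T(T(p,r),v) = K a (K (v-b)(r-b)(1/v² - 1/r²) + f(r) - f(v))` with
`f(x) = (x-b)/x²`. The function `f` attains its maximum `1/(4b)` at `x = 2b`, so for `r = 2b` and
`b < v < 2b` both summands are positive.
-/

noncomputable def vanDerWaals (K a b p v : ℝ) : ℝ := K * (p + a / v ^ 2) * (v - b)

section

variable {K a b : ℝ}

theorem vanDerWaals_pos (hK : 0 < K) (ha : 0 ≤ a) {p v : ℝ} (hp : 0 < p) (hv : b < v) :
    0 < vanDerWaals K a b p v := by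
  unfold vanDerWaals
  have : 0 < v - b := sub_pos.mpr hv
  positivity

theorem vanDerWaals_comp_sub_comp {p v r : ℝ} (hv : v ≠ 0) (hr : r ≠ 0) :
    vanDerWaals K a b (vanDerWaals K a b p v) r - vanDerWaals K a b (vanDerWaals K a b p r) v =
      K * a * (K * (v - b) * (r - b) * (1 / v ^ 2 - 1 / r ^ 2) +
        ((r - b) / r ^ 2 - (v - b) / v ^ 2)) := by
  unfold vanDerWaals
  field_simp
  ring

theorem sub_div_sq_le_two_mul_sub_div_sq (hb : 0 < b) {x : ℝ} (hx : x ≠ 0) :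
    (x - b) / x ^ 2 ≤ (2 * b - b) / (2 * b) ^ 2 := by
  rw [div_le_div_iff₀ (by positivity) (by positivity)]
  nlinarith [sq_nonneg (x - 2 * b), sq_nonneg x, mul_pos hb hb]

theorem vanDerWaals_comp_lt (hK : 0 < K) (ha : 0 < a) (hb : 0 < b) (p : ℝ) {v : ℝ}
    (hbv : b < v) (hv : v < 2 * b) :
    vanDerWaals K a b (vanDerWaals K a b p (2 * b)) v <
      vanDerWaals K a b (vanDerWaals K a b p v) (2 * b) := by
  have hv0 : 0 < v := hb.trans hbv
  rw [← sub_pos, vanDerWaals_comp_sub_comp hv0.ne' (by positivity)]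
  have hinv : 0 < 1 / v ^ 2 - 1 / (2 * b) ^ 2 := by
    rw [sub_pos]
    exact one_div_lt_one_div_of_lt (by positivity) (pow_lt_pow_left₀ hv hv0.le two_ne_zero)
  have hf := sub_div_sq_le_two_mul_sub_div_sq hb hv0.ne'
  have hcross : 0 < K * (v - b) * (2 * b - b) * (1 / v ^ 2 - 1 / (2 * b) ^ 2) :=
    mul_pos (mul_pos (mul_pos hK (by linarith)) (by linarith)) hinv
  exact mul_pos (mul_pos hK ha) (by linarith)

end

/-- Van der Waals' Equation `T(p,v) = K(p + a/v²)(v - b)` is not permutable: there are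
`p, v, r` with all iterated expressions defined such that `T(T(p,v),r) ≠ T(T(p,r),v)`. -/
theorem van_der_waals_not_permutable (K a b : ℝ) (hK : 0 < K) (ha : 0 < a) (hb : 0 < b)
    (T : ℝ → ℝ → ℝ) (hT : ∀ p v, T p v = K * (p + a / v ^ 2) * (v - b)) :
    ∃ p v r : ℝ, 0 < p ∧ b < v ∧ b < r ∧ 0 < T p v ∧ 0 < T p r ∧
      T (T p v) r ≠ T (T p r) v := by
  obtain rfl : T = vanDerWaals K a b := funext₂ hT
  refine ⟨1, 3 * b / 2, 2 * b, one_pos, by linarith, by linarith,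
    vanDerWaals_pos hK ha.le one_pos (by linarith), vanDerWaals_pos hK ha.le one_pos (by linarith),
    (vanDerWaals_comp_lt hK ha hb 1 (by linarith) (by linarith)).ne'⟩
end
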